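/- arXiv:2603.19900 — 7 statements merged into one kernel-verified Lean document; each statement's English description precedes it below -/
import Mathlib

section
/- Let x1 < x2 and y1 < y2 be real numbers. Then e^{x1 y1 + x2 y2} - e^{x1 y2 + x2 y1} ≥ (x2 - x1)(y2 - y1) e^{(x1+x2)(y1+y2)/2}. -/
theorem stmt_1 (x1 x2 y1 y2 : ℝ) (hx : x1 < x2) (hy : y1 < y2) :
    Real.exp (x1 * y1 + x2 * y2) - Real.exp (x1 * y2 + x2 * y1) ≥
      (x2 - x1) * (y2 - y1) * Real.exp ((x1 + x2) * (y1 + y2) / 2) := by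
  set m := (x1 + x2) * (y1 + y2) / 2 with hm
  set a := (x2 - x1) * (y2 - y1) / 2 with ha
  have ha0 : 0 ≤ a := by rw [ha]; nlinarith
  have h1 : x1 * y1 + x2 * y2 = m + a := by rw [hm, ha]; ring
  have h2 : x1 * y2 + x2 * y1 = m - a := by rw [hm, ha]; ring
  have hsinh : a ≤ Real.sinh a := Real.self_le_sinh_iff.mpr ha0
  have : Real.exp (m + a) - Real.exp (m - a) = 2 * Real.sinh a * Real.exp m := by
    rw [Real.sinh_eq, Real.exp_add, Real.exp_sub, Real.exp_neg]
    field_simp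
  rw [h1, h2, this]
  have h2a : (x2 - x1) * (y2 - y1) = 2 * a := by rw [ha]; ring
  rw [h2a]
  have := Real.exp_pos m
  nlinarith [Real.exp_pos m]
end

section
/- Let n ≥ 1 and let x1 < x2 < ... < xn and y1 < y2 < ... < yn be real numbers. Then the determinant of the n×n matrix A = [e^{x_i y_j}] satisfies det(A) ≤ (1/c_n) V(x) V(y) e^{x1 y1 + x2 y2 + ... + xn yn}, where V(x) = ∏_{i<j}(x_j - x_i), V(y) = ∏_{i<j}(y_j - y_i), and c_n = ∏_{i=1}^{n-1} i!. -/
open Finset Real MeasureTheory Matrix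

lemma det_ones_col {n : ℕ} (M : Matrix (Fin (n+1)) (Fin (n+1)) ℝ) (h : ∀ i, M i 0 = 1) :
    M.det = Matrix.det (Matrix.of fun i j : Fin n => M i.succ j.succ - M i.castSucc j.succ) := by
  set B : Matrix (Fin (n+1)) (Fin (n+1)) ℝ := Matrix.of fun i j =>
    Fin.cases (motive := fun _ => ℝ) (M 0 j) (fun k => M k.succ j - M k.castSucc j) i with hB
  have h1 : M.det = B.det := by
    apply Matrix.det_eq_of_forall_row_eq_smul_add_pred (fun _ => 1)
    · intro j; simp [hB]
    · intro i j; simp [hB]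
  rw [h1, Matrix.det_succ_column_zero]
  rw [Finset.sum_eq_single 0]
  · have hB00 : B 0 0 = 1 := by simp [hB, h 0]
    rw [hB00]
    have : (B.submatrix (Fin.succAbove 0) Fin.succ) =
        Matrix.of fun i j : Fin n => M i.succ j.succ - M i.castSucc j.succ := by
      ext i j
      simp [hB, Fin.succAbove, Matrix.submatrix_apply]
    rw [this]
    simp
  · intro i _ hi
    obtain ⟨k, rfl⟩ := Fin.exists_succ_eq.mpr (by simpa using hi)
    have : B k.succ 0 = 0 := by simp [hB, h]
    rw [this]; ring
  · simp

lemma det_integral_rows {n : ℕ} (h : Fin n → Fin n → ℝ → ℝ)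
    (hI : ∀ i j, Integrable (h i j)) :
    Matrix.det (Matrix.of fun i j => ∫ t, h i j t) =
    ∫ v : Fin n → ℝ, Matrix.det (Matrix.of fun i j => h i j (v i)) := by
  simp only [Matrix.det_apply', Matrix.of_apply]
  have key : ∀ σ : Equiv.Perm (Fin n),
      ((Equiv.Perm.sign σ : ℤ) : ℝ) * ∏ i, ∫ t, h (σ i) i t
      = ∫ v : Fin n → ℝ, ((Equiv.Perm.sign σ : ℤ) : ℝ) * ∏ i, h (σ i) i (v (σ i)) := by
    intro σ
    have e1 : (∏ i, ∫ t, h (σ i) i t) = ∏ j, ∫ t, h j (σ.symm j) t := by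
      rw [← Equiv.prod_comp σ (fun j => ∫ t, h j (σ.symm j) t)]
      simp
    have e2 : ∀ v : Fin n → ℝ, (∏ i, h (σ i) i (v (σ i))) = ∏ j, h j (σ.symm j) (v j) := by
      intro v
      rw [← Equiv.prod_comp σ (fun j => h j (σ.symm j) (v j))]
      simp
    simp only [e1, e2]
    rw [← integral_fintype_prod_eq_prod (ι := Fin n) (fun j => h j (σ.symm j))]
    rw [MeasureTheory.integral_const_mul, ← volume_pi]
  simp only [key]
  rw [← MeasureTheory.integral_finset_sum]
  intro σ _
  have : (fun v : Fin n → ℝ => ∏ j, h j (σ.symm j) (v j)) =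
      fun v : Fin n → ℝ => ∏ i, h (σ i) i (v (σ i)) := by
    funext v
    rw [← Equiv.prod_comp σ (fun j => h j (σ.symm j) (v j))]
    simp
  have hint := MeasureTheory.Integrable.fintype_prod (𝕜 := ℝ) (fun j => hI j (σ.symm j))
  rw [this] at hint
  exact hint.const_mul _

lemma det_rows_integrable {n : ℕ} (h : Fin n → Fin n → ℝ → ℝ)
    (hI : ∀ i j, Integrable (h i j)) :
    Integrable (fun v : Fin n → ℝ => Matrix.det (Matrix.of fun i j => h i j (v i))) := by
  simp only [Matrix.det_apply', Matrix.of_apply]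
  apply MeasureTheory.integrable_finset_sum
  intro σ _
  have : (fun v : Fin n → ℝ => ∏ j, h j (σ.symm j) (v j)) =
      fun v : Fin n → ℝ => ∏ i, h (σ i) i (v (σ i)) := by
    funext v
    rw [← Equiv.prod_comp σ (fun j => h j (σ.symm j) (v j))]
    simp
  have hint := MeasureTheory.Integrable.fintype_prod (𝕜 := ℝ) (fun j => hI j (σ.symm j))
  rw [this] at hint
  exact hint.const_mul _

lemma exp_entry {a b : ℝ} (c : ℝ) (hab : a ≤ b) :
    Real.exp (b * c) - Real.exp (a * c)
      = ∫ t, Set.indicator (Set.Ioc a b) (fun t => c * Real.exp (t * c)) t := by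
  rw [MeasureTheory.integral_indicator measurableSet_Ioc, ← intervalIntegral.integral_of_le hab]
  have D : ∀ t ∈ Set.uIcc a b, HasDerivAt (fun t => Real.exp (t * c)) (c * Real.exp (t * c)) t := by
    intro t _
    have := (Real.hasDerivAt_exp (t * c)).comp t (hasDerivAt_mul_const c)
    convert (hasDerivAt_mul_const (x := t) c).exp using 1; ring
  rw [intervalIntegral.integral_eq_sub_of_hasDerivAt D]
  exact (by continuity : Continuous fun t => c * Real.exp (t * c)).intervalIntegrable a b

lemma pow_entry {a b : ℝ} (j : ℕ) (hab : a ≤ b) :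
    (∫ t, Set.indicator (Set.Ioc a b) (fun t => t ^ j) t)
      = (b ^ (j+1) - a ^ (j+1)) / (j+1) := by
  rw [MeasureTheory.integral_indicator measurableSet_Ioc, ← intervalIntegral.integral_of_le hab]
  simpa using integral_pow (a := a) (b := b) j

lemma ind_integrable {a b : ℝ} {f : ℝ → ℝ} (hf : Continuous f) :
    Integrable (Set.indicator (Set.Ioc a b) f) := by
  rw [MeasureTheory.integrable_indicator_iff measurableSet_Ioc]
  exact hf.integrableOn_Ioc

lemma vandermonde_box {n : ℕ} (x : Fin (n+1) → ℝ) (hx : Monotone x) :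
    (∫ v : Fin n → ℝ,
      (∏ i, Set.indicator (Set.Ioc (x i.castSucc) (x i.succ)) (fun _ => (1:ℝ)) (v i)) *
        ∏ i : Fin n, ∏ j ∈ Ioi i, (v j - v i))
      = (∏ i : Fin (n+1), ∏ j ∈ Ioi i, (x j - x i)) / (Nat.factorial n : ℝ) := by
  set h : Fin n → Fin n → ℝ → ℝ := fun i j t =>
    Set.indicator (Set.Ioc (x i.castSucc) (x i.succ)) (fun t => t ^ (j : ℕ)) t with hh
  have hIoc : ∀ i : Fin n, x i.castSucc ≤ x i.succ := fun i => hx (show i.castSucc < i.succ from Fin.castSucc_lt_succ).le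
  have step1 : ∀ v : Fin n → ℝ,
      (∏ i, Set.indicator (Set.Ioc (x i.castSucc) (x i.succ)) (fun _ => (1:ℝ)) (v i)) *
        (∏ i : Fin n, ∏ j ∈ Ioi i, (v j - v i))
      = Matrix.det (Matrix.of fun i j => h i j (v i)) := by
    intro v
    have : (Matrix.of fun i j : Fin n => h i j (v i)) =
        Matrix.of (fun i j : Fin n =>
          (Set.indicator (Set.Ioc (x i.castSucc) (x i.succ)) (fun _ => (1:ℝ)) (v i)) *
            ((Matrix.vandermonde v) i j)) := by
      ext i j
      by_cases hm : v i ∈ Set.Ioc (x i.castSucc) (x i.succ) <;>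
        simp [hh, Matrix.vandermonde, Set.indicator_apply, hm]
    rw [this, Matrix.det_mul_column, Matrix.det_vandermonde]
  rw [show (fun v : Fin n → ℝ =>
      (∏ i, Set.indicator (Set.Ioc (x i.castSucc) (x i.succ)) (fun _ => (1:ℝ)) (v i)) *
        ∏ i : Fin n, ∏ j ∈ Ioi i, (v j - v i)) = fun v : Fin n → ℝ =>
        Matrix.det (Matrix.of fun i j => h i j (v i)) from funext step1]
  rw [← det_integral_rows h (fun i j => ind_integrable (by continuity))]
  have step2 : (Matrix.of fun i j : Fin n => ∫ t, h i j t) =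
      Matrix.of (fun i j : Fin n => (((j : ℕ) + 1 : ℝ))⁻¹ *
        ((x i.succ) ^ ((j : ℕ) + 1) - (x i.castSucc) ^ ((j : ℕ) + 1))) := by
    ext i j
    rw [Matrix.of_apply, Matrix.of_apply, hh, pow_entry _ (hIoc i)]
    push_cast
    ring
  rw [step2]
  have step3 : Matrix.det (Matrix.of (fun i j : Fin n => (((j : ℕ) + 1 : ℝ))⁻¹ *
        ((x i.succ) ^ ((j : ℕ) + 1) - (x i.castSucc) ^ ((j : ℕ) + 1))))
      = (∏ j : Fin n, (((j : ℕ) + 1 : ℝ))⁻¹) *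
        Matrix.det (Matrix.of (fun i j : Fin n =>
          (x i.succ) ^ ((j : ℕ) + 1) - (x i.castSucc) ^ ((j : ℕ) + 1))) := by
    exact Matrix.det_mul_row _ _
  rw [step3]
  have step4 : Matrix.det (Matrix.of (fun i j : Fin n =>
      (x i.succ) ^ ((j : ℕ) + 1) - (x i.castSucc) ^ ((j : ℕ) + 1)))
      = ∏ i : Fin (n+1), ∏ j ∈ Ioi i, (x j - x i) := by
    have h1 := det_ones_col (Matrix.of fun i j : Fin (n+1) => x i ^ (j : ℕ)) (by simp)
    rw [← Matrix.det_vandermonde x, show Matrix.vandermonde x =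
      Matrix.of (fun i j : Fin (n+1) => x i ^ (j : ℕ)) from rfl, h1]
    congr 1
  rw [step4]
  have step5 : (∏ j : Fin n, (((j : ℕ) + 1 : ℝ))⁻¹) = ((Nat.factorial n : ℝ))⁻¹ := by
    rw [Finset.prod_inv_distrib]
    congr 1
    rw [Fin.prod_univ_eq_prod_range (fun j => ((j : ℝ) + 1))]
    norm_cast
    exact Finset.prod_range_add_one_eq_factorial n
  rw [step5]
  ring

lemma box_fn_eq_det {n : ℕ} (x : Fin (n+1) → ℝ) :
    (fun v : Fin n → ℝ =>
      (∏ i, Set.indicator (Set.Ioc (x i.castSucc) (x i.succ)) (fun _ => (1:ℝ)) (v i)) *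
        ∏ i : Fin n, ∏ j ∈ Ioi i, (v j - v i))
    = fun v : Fin n → ℝ => Matrix.det (Matrix.of fun i j : Fin n =>
        Set.indicator (Set.Ioc (x i.castSucc) (x i.succ)) (fun t => t ^ (j : ℕ)) (v i)) := by
  funext v
  have : (Matrix.of fun i j : Fin n =>
      Set.indicator (Set.Ioc (x i.castSucc) (x i.succ)) (fun t => t ^ (j : ℕ)) (v i)) =
      Matrix.of (fun i j : Fin n =>
        (Set.indicator (Set.Ioc (x i.castSucc) (x i.succ)) (fun _ => (1:ℝ)) (v i)) *
          ((Matrix.vandermonde v) i j)) := by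
    ext i j
    by_cases hm : v i ∈ Set.Ioc (x i.castSucc) (x i.succ) <;>
      simp [Matrix.vandermonde, Set.indicator_apply, hm]
  rw [this, Matrix.det_mul_column, Matrix.det_vandermonde]

lemma expdet_le : ∀ n : ℕ, ∀ x y : Fin n → ℝ, StrictMono x → StrictMono y →
    Matrix.det (Matrix.of fun i j : Fin n => Real.exp (x i * y j)) ≤
      (1 / (∏ i ∈ Finset.range n, (Nat.factorial i : ℝ))) *
      (∏ i : Fin n, ∏ j ∈ Finset.Ioi i, (x j - x i)) *
      (∏ i : Fin n, ∏ j ∈ Finset.Ioi i, (y j - y i)) *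
      Real.exp (∑ i, x i * y i) := by
  intro n
  induction n with
  | zero => intro x y _ _; simp [Matrix.det_fin_zero]
  | succ n IH =>
    intro x y hx hy
    set s : Fin (n+1) → ℝ := fun j => y j - y 0 with hs
    -- positivity facts
    have hcn : (0:ℝ) < ∏ i ∈ Finset.range n, (Nat.factorial i : ℝ) := by
      apply Finset.prod_pos; intro i _; positivity
    have hspos : ∀ j : Fin n, 0 < s j.succ := by
      intro j; have := hy (Fin.succ_pos j); simpa [hs] using sub_pos.mpr this
    have hIoc : ∀ i : Fin n, x i.castSucc ≤ x i.succ :=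
      fun i => (hx (show i.castSucc < i.succ from Fin.castSucc_lt_succ)).le
    -- step 1 : row scaling
    have e1 : Matrix.det (Matrix.of fun i j : Fin (n+1) => Real.exp (x i * y j))
        = (∏ i, Real.exp (x i * y 0)) *
          Matrix.det (Matrix.of fun i j : Fin (n+1) => Real.exp (x i * s j)) := by
      have : (Matrix.of fun i j : Fin (n+1) => Real.exp (x i * y j))
          = Matrix.of (fun i j : Fin (n+1) => Real.exp (x i * y 0) *
              (Matrix.of fun i j : Fin (n+1) => Real.exp (x i * s j)) i j) := by
        ext i j
        simp only [Matrix.of_apply, hs, ← Real.exp_add]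
        ring_nf
      rw [this, Matrix.det_mul_column]
    -- step 2 : ones column + differences
    have e2 : Matrix.det (Matrix.of fun i j : Fin (n+1) => Real.exp (x i * s j))
        = Matrix.det (Matrix.of fun i j : Fin n =>
            Real.exp (x i.succ * s j.succ) - Real.exp (x i.castSucc * s j.succ)) := by
      rw [det_ones_col _ (by intro i; simp [hs])]; rfl
    -- step 3 : entries as integrals
    set h : Fin n → Fin n → ℝ → ℝ := fun i j t =>
      Set.indicator (Set.Ioc (x i.castSucc) (x i.succ))
        (fun t => s j.succ * Real.exp (t * s j.succ)) t with hh
    have hInt : ∀ i j, Integrable (h i j) := fun i j => ind_integrable (by continuity)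
    have e3 : (Matrix.of fun i j : Fin n =>
        Real.exp (x i.succ * s j.succ) - Real.exp (x i.castSucc * s j.succ))
        = Matrix.of fun i j : Fin n => ∫ t, h i j t := by
      ext i j
      exact exp_entry (s j.succ) (hIoc i)
    -- step 4 : det-integral swap
    have e4 : Matrix.det (Matrix.of fun i j : Fin n => ∫ t, h i j t)
        = ∫ v : Fin n → ℝ, Matrix.det (Matrix.of fun i j => h i j (v i)) :=
      det_integral_rows h hInt
    -- pointwise bound
    set Vs : ℝ := ∏ i : Fin n, ∏ j ∈ Ioi i, (y j.succ - y i.succ) with hVs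
    set Eb : ℝ := Real.exp (∑ i : Fin n, x i.succ * s i.succ) with hEb
    set cn : ℝ := ∏ i ∈ Finset.range n, (Nat.factorial i : ℝ) with hcn'
    have hVs0 : 0 ≤ Vs := by
      apply Finset.prod_nonneg; intro i _; apply Finset.prod_nonneg; intro j hj
      have : i < j := Finset.mem_Ioi.mp hj
      exact (sub_pos.mpr (hy (Fin.succ_lt_succ_iff.mpr this))).le
    have key : ∀ v : Fin n → ℝ,
        Matrix.det (Matrix.of fun i j => h i j (v i)) ≤
        ((∏ i, Set.indicator (Set.Ioc (x i.castSucc) (x i.succ)) (fun _ => (1:ℝ)) (v i)) *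
          ∏ i : Fin n, ∏ j ∈ Ioi i, (v j - v i)) *
          ((∏ j : Fin n, s j.succ) * ((1/cn) * Vs * Eb)) := by
      intro v
      have hsplit : (Matrix.of fun i j : Fin n => h i j (v i)) =
          Matrix.of (fun i j : Fin n =>
            (Set.indicator (Set.Ioc (x i.castSucc) (x i.succ)) (fun _ => (1:ℝ)) (v i)) *
              (Matrix.of (fun i j : Fin n => s j.succ * Real.exp (v i * s j.succ))) i j) := by
        ext i j
        by_cases hm : v i ∈ Set.Ioc (x i.castSucc) (x i.succ) <;>
          simp [hh, Set.indicator_apply, hm]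
      rw [hsplit, Matrix.det_mul_column]
      have hsplit2 : (Matrix.of (fun i j : Fin n => s j.succ * Real.exp (v i * s j.succ)))
          = Matrix.of (fun i j : Fin n => (fun j : Fin n => s j.succ) j *
              (Matrix.of (fun i j : Fin n => Real.exp (v i * s j.succ))) i j) := rfl
      rw [hsplit2, Matrix.det_mul_row]
      by_cases hv : ∀ i : Fin n, v i ∈ Set.Ioc (x i.castSucc) (x i.succ)
      · have hind : (∏ i, Set.indicator (Set.Ioc (x i.castSucc) (x i.succ))
            (fun _ => (1:ℝ)) (v i)) = 1 := by
          apply Finset.prod_eq_one; intro i _; simp [Set.indicator_of_mem (hv i)]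
        rw [hind, one_mul, one_mul]
        -- v is strictly monotone
        have hvmono : StrictMono v := by
          intro i j hij
          calc v i ≤ x i.succ := (hv i).2
          _ ≤ x j.castSucc := by
            apply hx.monotone
            rw [Fin.le_def, Fin.val_succ, Fin.coe_castSucc]
            exact hij
          _ < v j := (hv j).1
        have hVv0 : 0 ≤ ∏ i : Fin n, ∏ j ∈ Ioi i, (v j - v i) := by
          apply Finset.prod_nonneg; intro i _; apply Finset.prod_nonneg; intro j hj
          exact (sub_pos.mpr (hvmono (Finset.mem_Ioi.mp hj))).le
        have hIH := IH v (fun j => s j.succ) hvmono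
          (fun a b hab => by
            have : y a.succ < y b.succ := hy (Fin.succ_lt_succ_iff.mpr hab)
            simpa [hs] using sub_lt_sub_right this (y 0))
        have hprodpos : 0 ≤ ∏ j : Fin n, s j.succ :=
          Finset.prod_nonneg fun j _ => (hspos j).le
        have hdet : Matrix.det (Matrix.of fun i j : Fin n => Real.exp (v i * s j.succ))
            ≤ (∏ i : Fin n, ∏ j ∈ Ioi i, (v j - v i)) * ((1/cn) * Vs * Eb) :=
          calc Matrix.det (Matrix.of fun i j : Fin n => Real.exp (v i * s j.succ))
            ≤ (1/cn) * (∏ i : Fin n, ∏ j ∈ Ioi i, (v j - v i)) *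
              (∏ i : Fin n, ∏ j ∈ Ioi i, (s j.succ - s i.succ)) *
              Real.exp (∑ i : Fin n, v i * s i.succ) := hIH
          _ ≤ (1/cn) * (∏ i : Fin n, ∏ j ∈ Ioi i, (v j - v i)) * Vs * Eb := by
              have hVseq : (∏ i : Fin n, ∏ j ∈ Ioi i, (s j.succ - s i.succ)) = Vs := by
                rw [hVs]; congr 1; ext i; congr 1; ext j; simp only [hs]; ring
              rw [hVseq]
              apply mul_le_mul_of_nonneg_left _ (by positivity)
              rw [hEb]
              apply Real.exp_le_exp.mpr
              apply Finset.sum_le_sum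
              intro i _
              exact mul_le_mul_of_nonneg_right (hv i).2 (hspos i).le
          _ = (∏ i : Fin n, ∏ j ∈ Ioi i, (v j - v i)) * ((1/cn) * Vs * Eb) := by ring
        have hfin := mul_le_mul_of_nonneg_left hdet hprodpos
        calc (∏ i : Fin n, s i.succ) *
              Matrix.det (Matrix.of fun i j : Fin n => Real.exp (v i * s j.succ))
            ≤ (∏ j : Fin n, s j.succ) *
              ((∏ i : Fin n, ∏ j ∈ Ioi i, (v j - v i)) * ((1/cn) * Vs * Eb)) := hfin
          _ = (∏ i : Fin n, ∏ j ∈ Ioi i, (v j - v i)) *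
              ((∏ j : Fin n, s j.succ) * ((1/cn) * Vs * Eb)) := by ring
      · push_neg at hv
        obtain ⟨i0, hi0⟩ := hv
        have hind : (∏ i, Set.indicator (Set.Ioc (x i.castSucc) (x i.succ))
            (fun _ => (1:ℝ)) (v i)) = 0 := by
          apply Finset.prod_eq_zero (Finset.mem_univ i0)
          simp [Set.indicator_of_notMem hi0]
        rw [hind]; simp
    -- integrability of both sides
    set C : ℝ := (∏ j : Fin n, s j.succ) * ((1/cn) * Vs * Eb) with hC
    have hFint : Integrable (fun v : Fin n → ℝ =>
        Matrix.det (Matrix.of fun i j => h i j (v i))) := det_rows_integrable h hInt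
    have hboxint : Integrable (fun v : Fin n → ℝ =>
        (∏ i, Set.indicator (Set.Ioc (x i.castSucc) (x i.succ)) (fun _ => (1:ℝ)) (v i)) *
          ∏ i : Fin n, ∏ j ∈ Ioi i, (v j - v i)) := by
      rw [box_fn_eq_det x]
      exact det_rows_integrable _ (fun i j => ind_integrable (continuous_pow _))
    have hGint : Integrable (fun v : Fin n → ℝ =>
        ((∏ i, Set.indicator (Set.Ioc (x i.castSucc) (x i.succ)) (fun _ => (1:ℝ)) (v i)) *
          ∏ i : Fin n, ∏ j ∈ Ioi i, (v j - v i)) * C) := hboxint.mul_const C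
    have hintle : (∫ v : Fin n → ℝ, Matrix.det (Matrix.of fun i j => h i j (v i)))
        ≤ ∫ v : Fin n → ℝ,
          ((∏ i, Set.indicator (Set.Ioc (x i.castSucc) (x i.succ)) (fun _ => (1:ℝ)) (v i)) *
            ∏ i : Fin n, ∏ j ∈ Ioi i, (v j - v i)) * C :=
      MeasureTheory.integral_mono hFint hGint key
    have hGeq : (∫ v : Fin n → ℝ,
        ((∏ i, Set.indicator (Set.Ioc (x i.castSucc) (x i.succ)) (fun _ => (1:ℝ)) (v i)) *
          ∏ i : Fin n, ∏ j ∈ Ioi i, (v j - v i)) * C)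
        = ((∏ i : Fin (n+1), ∏ j ∈ Ioi i, (x j - x i)) / (Nat.factorial n : ℝ)) * C := by
      rw [MeasureTheory.integral_mul_const, vandermonde_box x hx.monotone]
    -- combine exponentials
    have hcomb : (∏ i : Fin (n+1), Real.exp (x i * y 0)) * Eb
        = Real.exp (∑ i : Fin (n+1), x i * y i) := by
      rw [hEb, ← Real.exp_sum, ← Real.exp_add]
      congr 1
      rw [Fin.sum_univ_succ (f := fun i => x i * y i),
        Fin.sum_univ_succ (f := fun i => x i * y 0)]
      simp only [hs, mul_sub]
      rw [Finset.sum_sub_distrib]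
      ring
    have hVy : (∏ i : Fin (n+1), ∏ j ∈ Ioi i, (y j - y i))
        = (∏ j : Fin n, s j.succ) * Vs := by
      rw [Fin.prod_univ_succ (f := fun i => ∏ j ∈ Ioi i, (y j - y i)), Fin.prod_Ioi_zero]
      refine congrArg₂ (· * ·) ?_ ?_
      · apply Finset.prod_congr rfl; intro j _; rfl
      · rw [hVs]; apply Finset.prod_congr rfl; intro i _; rw [Fin.prod_Ioi_succ]
    have hcn1 : (∏ i ∈ Finset.range (n+1), (Nat.factorial i : ℝ))
        = cn * (Nat.factorial n : ℝ) := by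
      rw [hcn', Finset.prod_range_succ]
    have hexpnn : (0:ℝ) ≤ ∏ i : Fin (n+1), Real.exp (x i * y 0) :=
      Finset.prod_nonneg fun i _ => (Real.exp_pos _).le
    calc Matrix.det (Matrix.of fun i j : Fin (n+1) => Real.exp (x i * y j))
        = (∏ i, Real.exp (x i * y 0)) *
          Matrix.det (Matrix.of fun i j : Fin (n+1) => Real.exp (x i * s j)) := e1
      _ = (∏ i, Real.exp (x i * y 0)) *
          ∫ v : Fin n → ℝ, Matrix.det (Matrix.of fun i j => h i j (v i)) := by
            rw [e2, e3, e4]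
      _ ≤ (∏ i, Real.exp (x i * y 0)) *
          (((∏ i : Fin (n+1), ∏ j ∈ Ioi i, (x j - x i)) / (Nat.factorial n : ℝ)) * C) := by
            apply mul_le_mul_of_nonneg_left _ hexpnn
            rw [← hGeq]; exact hintle
      _ = (1 / (∏ i ∈ Finset.range (n+1), (Nat.factorial i : ℝ))) *
          (∏ i : Fin (n+1), ∏ j ∈ Finset.Ioi i, (x j - x i)) *
          (∏ i : Fin (n+1), ∏ j ∈ Finset.Ioi i, (y j - y i)) *
          Real.exp (∑ i, x i * y i) := by
            rw [hcn1, hVy, ← hcomb, hC]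
            have hn0 : (Nat.factorial n : ℝ) ≠ 0 := Nat.cast_ne_zero.mpr (Nat.factorial_ne_zero n)
            field_simp
            have hc : ∀ i, y 0 * x i = x i * y 0 := fun i => mul_comm _ _
            simp only [hc]
            ring

theorem stmt_8 (n : ℕ) (hn : 1 ≤ n) (x y : Fin n → ℝ)
    (hx : StrictMono x) (hy : StrictMono y) :
    Matrix.det (Matrix.of fun i j : Fin n => Real.exp (x i * y j)) ≤
      (1 / (∏ i ∈ Finset.range n, (Nat.factorial i : ℝ))) *
      (∏ i : Fin n, ∏ j ∈ Finset.Ioi i, (x j - x i)) *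
      (∏ i : Fin n, ∏ j ∈ Finset.Ioi i, (y j - y i)) *
      Real.exp (∑ i, x i * y i) := by
  exact expdet_le n x y hx hy
end

section
/- Let n ≥ 1 and let x1 < ... < xn and y1 < ... < yn be real. Then det([e^{x_i y_j}]_{i,j=1,...,n}) > 0. -/
open Filter Set Real

/-- An exponential sum with `n` distinct frequencies vanishing at `n` increasing
points has all coefficients zero. -/
lemma expzero : ∀ (n : ℕ) (a c t : Fin n → ℝ), StrictMono a → StrictMono t →
    (∀ j, ∑ i, c i * Real.exp (a i * t j) = 0) → c = 0 := by
  intro n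
  induction n with
  | zero => intro a c t _ _ _; exact Subsingleton.elim _ _
  | succ n IH =>
    intro a c t ha ht h
    set g : ℝ → ℝ := fun s => ∑ i, c i * Real.exp ((a i - a 0) * s) with hgdef
    set gd : ℝ → ℝ := fun s => ∑ i, c i * ((a i - a 0) * Real.exp ((a i - a 0) * s)) with hgddef
    have hg : ∀ s, HasDerivAt g (gd s) s := by
      intro s
      have := HasDerivAt.fun_sum (u := Finset.univ)
        (fun i (_ : i ∈ Finset.univ) =>
          (((hasDerivAt_id s).const_mul (a i - a 0)).exp.const_mul (c i)))
      simpa [g, gd, id_eq, mul_one, mul_comm, mul_assoc, mul_left_comm] using this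
    have hg0 : ∀ j, g (t j) = 0 := by
      intro j
      have hfac : g (t j) = (∑ i, c i * Real.exp (a i * t j)) * Real.exp (-(a 0 * t j)) := by
        simp only [hgdef]
        rw [Finset.sum_mul]
        refine Finset.sum_congr rfl fun i _ => ?_
        rw [mul_assoc, ← Real.exp_add]
        rw [show a i * t j + -(a 0 * t j) = (a i - a 0) * t j by ring]
      rw [hfac, h j, zero_mul]
    have hR : ∀ j : Fin n, ∃ s ∈ Set.Ioo (t j.castSucc) (t j.succ), gd s = 0 := by
      intro j
      exact exists_hasDerivAt_eq_zero (ht (Fin.castSucc_lt_succ : j.castSucc < j.succ))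
        (HasDerivAt.continuousOn fun x _ => hg x)
        (by rw [hg0, hg0]) (fun x _ => hg x)
    choose s hs1 hs2 using hR
    have hsmono : StrictMono s := by
      intro j k hjk
      have h1 : s j < t j.succ := (hs1 j).2
      have h2 : t k.castSucc < s k := (hs1 k).1
      have h3 : t j.succ ≤ t k.castSucc :=
        ht.monotone (Fin.succ_le_castSucc_iff.2 hjk)
      linarith
    have hcz : (fun i : Fin n => c i.succ * (a i.succ - a 0)) = 0 := by
      refine IH (fun i => a i.succ - a 0) _ s
        (fun i j hij => sub_lt_sub_right ((ha.comp Fin.strictMono_succ) hij) _)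
        hsmono ?_
      intro j
      have h5 := hs2 j
      simp only [hgddef, Fin.sum_univ_succ, sub_self, zero_mul, mul_zero, zero_add] at h5
      rw [← h5]
      exact Finset.sum_congr rfl fun i _ => by ring
    have hcsucc : ∀ i : Fin n, c i.succ = 0 := by
      intro i
      have h1 := congrFun hcz i
      have h2 : a 0 < a i.succ := ha (Fin.succ_pos i)
      have h3 : a i.succ - a 0 ≠ 0 := by linarith
      simpa [h3] using h1
    have hc0 : c 0 = 0 := by
      have h6 := h 0
      rw [Fin.sum_univ_succ] at h6
      simp only [hcsucc, zero_mul, Finset.sum_const_zero, add_zero] at h6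
      rcases mul_eq_zero.mp h6 with hh | hh
      · exact hh
      · exact absurd hh (Real.exp_ne_zero _)
    funext i
    refine Fin.cases ?_ ?_ i
    · exact hc0
    · intro j; exact hcsucc j

lemma update_last_strictMono {n : ℕ} {y : Fin (n + 1) → ℝ} (hy : StrictMono y) {t : ℝ}
    (htt : ∀ j : Fin n, y j.castSucc < t) :
    StrictMono (Function.update y (Fin.last n) t) := by
  intro a b hab
  rcases eq_or_ne b (Fin.last n) with rfl | hb
  · have ha : a ≠ Fin.last n := hab.ne
    obtain ⟨j, rfl⟩ := Fin.exists_castSucc_eq.2 ha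
    rw [Function.update_of_ne ha, Function.update_self]
    exact htt j
  · have hb' : b < Fin.last n := lt_of_le_of_ne (Fin.le_last b) hb
    have ha : a ≠ Fin.last n := (hab.trans hb').ne
    rw [Function.update_of_ne ha, Function.update_of_ne hb]
    exact hy hab

lemma expdet_pos : ∀ (n : ℕ) (x y : Fin n → ℝ), StrictMono x → StrictMono y →
    0 < Matrix.det (Matrix.of fun i j : Fin n => Real.exp (x i * y j)) := by
  intro n
  induction n with
  | zero => intro x y _ _; simp [Matrix.det_fin_zero]
  | succ n IH =>
    intro x y hx hy
    set L : Fin (n + 1) := Fin.last n with hL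
    set D : Fin (n + 1) → ℝ := fun i =>
      (Matrix.of fun i' j' : Fin n =>
        Real.exp (x (i.succAbove i') * y j'.castSucc)).det with hD
    set f : ℝ → ℝ := fun t =>
      ∑ i : Fin (n + 1), (-1 : ℝ) ^ ((i : ℕ) + (L : ℕ)) * Real.exp (x i * t) * D i with hf
    have hfdet : ∀ t,
        (Matrix.of fun i j => Real.exp (x i * Function.update y L t j)).det = f t := by
      intro t
      rw [Matrix.det_succ_column (Matrix.of fun i j =>
        Real.exp (x i * Function.update y L t j)) L]
      simp only [hf]
      refine Finset.sum_congr rfl fun i _ => ?_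
      congr 1
      · simp
      · simp only [hD]
        congr 1
        funext i' j'
        simp only [Matrix.submatrix_apply, Matrix.of_apply, hL, Fin.succAbove_last]
        rw [Function.update_of_ne (Fin.castSucc_lt_last j').ne]
    have hDL : 0 < D L := by
      have hIH := IH (x ∘ Fin.castSucc) (y ∘ Fin.castSucc)
        (hx.comp Fin.strictMono_castSucc) (hy.comp Fin.strictMono_castSucc)
      have hEq : (Matrix.of fun i' j' : Fin n =>
          Real.exp (x (L.succAbove i') * y j'.castSucc)) =
          (Matrix.of fun i' j' : Fin n =>
            Real.exp ((x ∘ Fin.castSucc) i' * (y ∘ Fin.castSucc) j')) := by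
        funext i' j'
        simp [hL, Fin.succAbove_last]
      simp only [hD]
      rw [hEq]
      exact hIH
    -- nonvanishing of f on [y L, ∞)
    have hne : ∀ t, y L ≤ t → f t ≠ 0 := by
      intro t htge h0
      have htt : ∀ j : Fin n, y j.castSucc < t :=
        fun j => lt_of_lt_of_le (hy (Fin.castSucc_lt_last j)) htge
      set y' := Function.update y L t with hy'def
      have hy' : StrictMono y' := update_last_strictMono hy htt
      have hdet0 : (Matrix.of fun i j => Real.exp (x i * y' j)).det = 0 := by
        rw [hy'def, hfdet t]; exact h0
      have hdetT : ((Matrix.of fun i j => Real.exp (x i * y' j)).transpose).det = 0 := by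
        rw [Matrix.det_transpose]; exact hdet0
      obtain ⟨v, hv, hMv⟩ := Matrix.exists_mulVec_eq_zero_iff.2 hdetT
      apply hv
      refine expzero (n + 1) x v y' hx hy' ?_
      intro j
      have := congrFun hMv j
      simpa [Matrix.mulVec, dotProduct, Matrix.transpose_apply, mul_comm] using this
    -- asymptotics: f t * exp (-(x L) * t) → D L
    have hlim : Tendsto (fun t => f t * Real.exp (-(x L) * t)) atTop (nhds (D L)) := by
      have hterm : ∀ i : Fin (n + 1),
          Tendsto (fun t => (-1 : ℝ) ^ ((i : ℕ) + (L : ℕ)) * Real.exp ((x i - x L) * t) * D i)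
            atTop (nhds (if i = L then D L else 0)) := by
        intro i
        by_cases hiL : i = L
        · have hfun : ∀ t : ℝ,
              (-1 : ℝ) ^ ((i : ℕ) + (L : ℕ)) * Real.exp ((x i - x L) * t) * D i = D L := by
            intro t
            rw [hiL, sub_self, zero_mul, Real.exp_zero, mul_one, ← two_mul, pow_mul]
            norm_num
          rw [if_pos hiL]
          exact Tendsto.congr (fun t => (hfun t).symm) tendsto_const_nhds
        · have hilt : i < L := lt_of_le_of_ne (Fin.le_last i) hiL
          have hxlt : x i - x L < 0 := sub_neg.2 (hx hilt)
          have h1 : Tendsto (fun t : ℝ => (x i - x L) * t) atTop atBot :=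
            Tendsto.const_mul_atTop_of_neg hxlt tendsto_id
          have h2 : Tendsto (fun t : ℝ => Real.exp ((x i - x L) * t)) atTop (nhds 0) :=
            Real.tendsto_exp_atBot.comp h1
          rw [if_neg hiL]
          have := (h2.const_mul ((-1 : ℝ) ^ ((i : ℕ) + (L : ℕ)))).mul_const (D i)
          simpa using this
      have hsum := tendsto_finset_sum Finset.univ (fun i (_ : i ∈ Finset.univ) => hterm i)
      have hval : (∑ i : Fin (n + 1), if i = L then D L else 0) = D L := by
        simp
      rw [hval] at hsum
      refine hsum.congr fun t => ?_
      simp only [hf]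
      rw [Finset.sum_mul]
      refine Finset.sum_congr rfl fun i _ => ?_
      rw [show (x i - x L) * t = x i * t + -x L * t by ring, Real.exp_add]
      ring
    have hev : ∀ᶠ t in atTop, 0 < f t := by
      have h1 : ∀ᶠ t in atTop, 0 < f t * Real.exp (-(x L) * t) :=
        hlim.eventually (eventually_gt_nhds hDL)
      filter_upwards [h1] with t ht
      nlinarith [Real.exp_pos (-(x L) * t)]
    obtain ⟨T, hT1, hT2⟩ := (hev.and (eventually_ge_atTop (y L + 1))).exists
    have hTgt : y L < T := by linarith
    have hcont : Continuous f := by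
      simp only [hf]
      exact continuous_finset_sum _ fun i _ =>
        (continuous_const.mul (Real.continuous_exp.comp (continuous_const.mul continuous_id))).mul
          continuous_const
    have hfy : 0 < f (y L) := by
      rcases lt_trichotomy (f (y L)) 0 with hneg | hzero | hpos
      · exfalso
        have hsub : Set.Icc (f (y L)) (f T) ⊆ f '' Set.Icc (y L) T :=
          intermediate_value_Icc hTgt.le hcont.continuousOn
        obtain ⟨t, ht, hft⟩ := hsub ⟨hneg.le, hT1.le⟩
        exact hne t ht.1 hft
      · exact absurd hzero (hne (y L) le_rfl)
      · exact hpos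
    have hfinal :
        Matrix.det (Matrix.of fun i j : Fin (n + 1) => Real.exp (x i * y j)) = f (y L) := by
      rw [← hfdet (y L), Function.update_eq_self]
    rw [hfinal]
    exact hfy

theorem stmt_9 (n : ℕ) (hn : 1 ≤ n) (x y : Fin n → ℝ)
    (hx : StrictMono x) (hy : StrictMono y) :
    0 < Matrix.det (Matrix.of fun i j : Fin n => Real.exp (x i * y j)) :=
  expdet_pos n x y hx hy
end

section
/- Let n ≥ 3 and let x1 < ... < xn and y1 < ... < yn be real numbers. Set u_j = y_{j+1} - y1 for j = 1,...,n-1. Then det([e^{x_i y_j}]_{i,j=1,...,n}) = e^{(x1+...+xn) y1} · u1 ··· u_{n-1} · ∫_{x_{n-1}}^{x_n} ··· ∫_{x_1}^{x_2} det([e^{t_i u_j}]_{i,j=1,...,n-1}) dt_1 ··· dt_{n-1}. -/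
open Finset Real MeasureTheory

lemma aux_exp_int {a b : ℝ} (c : ℝ) (hc : c ≠ 0) (hab : a ≤ b) :
    ∫ t in Set.Icc a b, Real.exp (t * c) = (Real.exp (b * c) - Real.exp (a * c)) / c := by
  rw [MeasureTheory.integral_Icc_eq_integral_Ioc, ← intervalIntegral.integral_of_le hab,
    intervalIntegral.integral_comp_mul_right Real.exp hc, integral_exp, smul_eq_mul]
  ring

lemma aux_int_det (m : ℕ) (g : Fin m → ℝ → ℝ) (hg : ∀ j, Continuous (g j))
    (a b : Fin m → ℝ) :
    (∫ t : Fin m → ℝ in Set.univ.pi fun i => Set.Icc (a i) (b i),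
        Matrix.det (Matrix.of fun i j : Fin m => g j (t i)))
      = Matrix.det (Matrix.of fun i j : Fin m => ∫ t in Set.Icc (a i) (b i), g j t) := by
  have hS : MeasurableSet (Set.univ.pi fun i : Fin m => Set.Icc (a i) (b i)) :=
    MeasurableSet.univ_pi fun i => measurableSet_Icc
  have hcomp : IsCompact (Set.univ.pi fun i : Fin m => Set.Icc (a i) (b i)) :=
    isCompact_univ_pi fun i => isCompact_Icc
  simp only [Matrix.det_apply', Matrix.of_apply]
  rw [MeasureTheory.integral_finset_sum]
  · refine Finset.sum_congr rfl fun σ _ => ?_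
    rw [MeasureTheory.integral_const_mul]
    congr 1
    calc ∫ t : Fin m → ℝ in Set.univ.pi fun i => Set.Icc (a i) (b i), ∏ i, g i (t (σ i))
        = ∫ t : Fin m → ℝ in Set.univ.pi fun i => Set.Icc (a i) (b i),
            ∏ k, g (σ⁻¹ k) (t k) := by
          refine integral_congr_ae (Filter.Eventually.of_forall fun t => ?_)
          show (∏ i, g i (t (σ i))) = ∏ k, g (σ⁻¹ k) (t k)
          rw [← Equiv.prod_comp σ (fun k => g (σ⁻¹ k) (t k))]
          simp
      _ = ∫ t : Fin m → ℝ, ∏ k, (Set.Icc (a k) (b k)).indicator (g (σ⁻¹ k)) (t k) := by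
          rw [← integral_indicator hS]
          refine integral_congr_ae (Filter.Eventually.of_forall fun t => ?_)
          show (Set.univ.pi fun i : Fin m => Set.Icc (a i) (b i)).indicator
              (fun t => ∏ k, g (σ⁻¹ k) (t k)) t
              = ∏ k, (Set.Icc (a k) (b k)).indicator (g (σ⁻¹ k)) (t k)
          by_cases ht : t ∈ Set.univ.pi fun i : Fin m => Set.Icc (a i) (b i)
          · rw [Set.indicator_of_mem ht]
            exact Finset.prod_congr rfl fun k _ =>
              (Set.indicator_of_mem (ht k (Set.mem_univ k)) _).symm
          · rw [Set.indicator_of_notMem ht]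
            rw [Set.mem_univ_pi, not_forall] at ht
            obtain ⟨k, hk⟩ := ht
            exact (Finset.prod_eq_zero (Finset.mem_univ k)
              (Set.indicator_of_notMem hk _)).symm
      _ = ∏ k, ∫ t : ℝ, (Set.Icc (a k) (b k)).indicator (g (σ⁻¹ k)) t :=
          MeasureTheory.integral_fintype_prod_eq_prod _
      _ = ∏ k, ∫ t in Set.Icc (a k) (b k), g (σ⁻¹ k) t := by
          simp [integral_indicator measurableSet_Icc]
      _ = ∏ i, ∫ t in Set.Icc (a (σ i)) (b (σ i)), g i t := by
          rw [← Equiv.prod_comp σ (fun k => ∫ t in Set.Icc (a k) (b k), g (σ⁻¹ k) t)]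
          simp
  · intro σ _
    refine (Continuous.continuousOn ?_).integrableOn_compact hcomp
    exact continuous_const.mul (continuous_finset_prod _ fun i _ =>
      (hg i).comp (continuous_apply (σ i)))

theorem stmt_10 (m : ℕ) (hm : 3 ≤ m + 1) (x y : Fin (m + 1) → ℝ)
    (hx : StrictMono x) (hy : StrictMono y) :
    Matrix.det (Matrix.of fun i j : Fin (m + 1) => Real.exp (x i * y j)) =
      Real.exp ((∑ i, x i) * y 0) * (∏ j : Fin m, (y j.succ - y 0)) *
        ∫ t : Fin m → ℝ in Set.univ.pi fun i : Fin m => Set.Icc (x i.castSucc) (x i.succ),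
          Matrix.det (Matrix.of fun i j : Fin m => Real.exp (t i * (y j.succ - y 0))) := by
  have hupos : ∀ j : Fin m, (0:ℝ) < y j.succ - y 0 := fun j => sub_pos.2 (hy (Fin.succ_pos j))
  have hu0 : ∀ j : Fin m, y j.succ - y 0 ≠ 0 := fun j => ne_of_gt (hupos j)
  set A : Matrix (Fin (m+1)) (Fin (m+1)) ℝ :=
    Matrix.of fun i j => Real.exp (x i * (y j - y 0)) with hA
  -- Step 1: factor out exp (x i * y 0) from each row
  have step1 : (Matrix.of fun i j : Fin (m + 1) => Real.exp (x i * y j)).det =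
      Real.exp ((∑ i, x i) * y 0) * A.det := by
    have : (Matrix.of fun i j : Fin (m + 1) => Real.exp (x i * y j)) =
        Matrix.of fun i j => Real.exp (x i * y 0) * A i j := by
      ext i j
      rw [hA]
      simp only [Matrix.of_apply, ← Real.exp_add]
      ring_nf
    rw [this, Matrix.det_mul_column, ← Real.exp_sum, ← Finset.sum_mul]
  -- Step 2: row reduction
  set B : Matrix (Fin (m+1)) (Fin (m+1)) ℝ := Matrix.of fun i j =>
    Fin.cases (A 0 j) (fun i' => A i'.succ j - A i'.castSucc j) i with hB
  have hB0 : ∀ j, B 0 j = A 0 j := fun j => by simp [hB]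
  have hBs : ∀ (i : Fin m) (j), B i.succ j = A i.succ j - A i.castSucc j := fun i j => by
    simp [hB]
  have hAB : A.det = B.det :=
    Matrix.det_eq_of_forall_row_eq_smul_add_pred (fun _ => 1)
      (fun j => (hB0 j).symm) (fun i j => by rw [hBs]; ring)
  -- Step 3: expand along first column
  have hcol : ∀ i : Fin m, B i.succ 0 = 0 := fun i => by
    rw [hBs, hA]; simp
  have hB00 : B 0 0 = 1 := by rw [hB0, hA]; simp
  have hdetB : B.det = Matrix.det (Matrix.of fun i j : Fin m =>
      A i.succ j.succ - A i.castSucc j.succ) := by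
    have hsub : B.submatrix (Fin.succAbove 0) Fin.succ =
        Matrix.of (fun i j : Fin m => A i.succ j.succ - A i.castSucc j.succ) := by
      ext i j
      simp [Matrix.submatrix_apply, Fin.succAbove_zero, hBs]
    rw [Matrix.det_succ_column_zero, Fin.sum_univ_succ, hsub]
    simp [hcol, hB00]
  -- Step 4: entries as integrals
  have key : (Matrix.of fun i j : Fin m => A i.succ j.succ - A i.castSucc j.succ) =
      Matrix.of fun i j : Fin m => (y j.succ - y 0) *
        ∫ t in Set.Icc (x i.castSucc) (x i.succ), Real.exp (t * (y j.succ - y 0)) := by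
    ext i j
    rw [Matrix.of_apply, Matrix.of_apply,
      aux_exp_int _ (hu0 j) (le_of_lt (hx (Fin.castSucc_lt_succ (i := i)))), hA]
    simp only [Matrix.of_apply]
    rw [← mul_div_assoc, mul_div_cancel_left₀ _ (hu0 j)]
  -- Step 5: pull out column factors and exchange integral and determinant
  have step5 : Matrix.det (Matrix.of fun i j : Fin m => (y j.succ - y 0) *
        ∫ t in Set.Icc (x i.castSucc) (x i.succ), Real.exp (t * (y j.succ - y 0))) =
      (∏ j : Fin m, (y j.succ - y 0)) *
        ∫ t : Fin m → ℝ in Set.univ.pi fun i : Fin m => Set.Icc (x i.castSucc) (x i.succ),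
          Matrix.det (Matrix.of fun i j : Fin m => Real.exp (t i * (y j.succ - y 0))) := by
    have hdr := Matrix.det_mul_row (fun j : Fin m => y j.succ - y 0) (Matrix.of fun i j : Fin m =>
      ∫ t in Set.Icc (x i.castSucc) (x i.succ), Real.exp (t * (y j.succ - y 0)))
    simp only [Matrix.of_apply] at hdr
    rw [hdr]
    congr 1
    exact (aux_int_det m (fun j t => Real.exp (t * (y j.succ - y 0)))
      (fun j => (continuous_id.mul continuous_const).rexp)
      (fun i => x i.castSucc) (fun i => x i.succ)).symm
  rw [step1, hAB, hdetB, key, step5, mul_assoc]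
end

section
/- Let n ≥ 2 and x1 ≤ x2 ≤ ... ≤ xn be real. Then ∫_{x_{n-1}}^{x_n} ··· ∫_{x_1}^{x_2} V(t_1,...,t_{n-1}) dt_1 ··· dt_{n-1} = V(x_1,...,x_n)/(n-1)!, where V(v_1,...,v_m) = ∏_{1≤i<j≤m}(v_j - v_i) is the Vandermonde polynomial. -/
open Finset Real MeasureTheory


-- helper: integral of product over a box
lemma box_integral {m : ℕ} (f : Fin m → ℝ → ℝ) (a b : Fin m → ℝ) :
    (∫ t : Fin m → ℝ in Set.univ.pi fun i : Fin m => Set.Icc (a i) (b i),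
      ∏ i : Fin m, f i (t i)) = ∏ i : Fin m, ∫ s in Set.Icc (a i) (b i), f i s := by
  rw [← integral_indicator (MeasurableSet.univ_pi fun i => measurableSet_Icc)]
  have h : ∀ t : Fin m → ℝ,
      (Set.univ.pi fun i : Fin m => Set.Icc (a i) (b i)).indicator
        (fun t : Fin m → ℝ => ∏ i : Fin m, f i (t i)) t
        = ∏ i : Fin m, (Set.Icc (a i) (b i)).indicator (f i) (t i) := by
    intro t
    by_cases ht : t ∈ Set.univ.pi fun i : Fin m => Set.Icc (a i) (b i)
    · rw [Set.indicator_of_mem ht]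
      exact Finset.prod_congr rfl fun i _ =>
        (Set.indicator_of_mem (ht i (Set.mem_univ i)) _).symm
    · rw [Set.indicator_of_notMem ht]
      rw [Set.mem_univ_pi, not_forall] at ht
      obtain ⟨i, hi⟩ := ht
      exact (Finset.prod_eq_zero (Finset.mem_univ i)
        (Set.indicator_of_notMem hi _)).symm
  simp_rw [h]
  rw [MeasureTheory.integral_fintype_prod_volume_eq_prod
    (fun i => (Set.Icc (a i) (b i)).indicator (f i))]
  simp_rw [integral_indicator measurableSet_Icc]


lemma det_diff_eq (m : ℕ) (x : Fin (m + 1) → ℝ) :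
    (Matrix.of fun i j : Fin m =>
      x i.succ ^ ((j : ℕ) + 1) - x i.castSucc ^ ((j : ℕ) + 1)).det
    = (Matrix.vandermonde x).det := by
  set C : Matrix (Fin (m + 1)) (Fin (m + 1)) ℝ :=
    Matrix.of (Fin.cases (fun j => x 0 ^ (j : ℕ))
      (fun i j => x i.succ ^ (j : ℕ) - x i.castSucc ^ (j : ℕ))) with hC
  set P : Matrix (Fin (m + 1)) (Fin (m + 1)) ℝ :=
    Matrix.of fun i k => if k ≤ i then (1 : ℝ) else 0 with hP
  have tele : ∀ j i : Fin (m + 1), (∑ k, if k ≤ i then C k j else 0) = x i ^ (j : ℕ) := by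
    intro j i
    induction i using Fin.induction with
    | zero =>
        have h0 : ∀ k : Fin (m + 1), (if k ≤ 0 then C k j else 0)
            = if k = 0 then C k j else 0 := by
          intro k; simp [Fin.le_zero_iff]
        simp_rw [h0]
        rw [Finset.sum_ite_eq' Finset.univ 0 (fun k => C k j)]
        simp [hC]
    | succ i ih =>
        have hsplit : ∀ k : Fin (m + 1), (if k ≤ i.succ then C k j else 0)
            = (if k ≤ i.castSucc then C k j else 0) + (if k = i.succ then C k j else 0) := by
          intro k
          have h1 : (k : ℕ) ≤ (i : ℕ) + 1 ↔ (k : ℕ) ≤ (i : ℕ) ∨ (k : ℕ) = (i : ℕ) + 1 :=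
            Nat.le_succ_iff_eq_or_le.trans (or_comm)
          by_cases hk1 : k ≤ i.castSucc
          · have : k ≤ i.succ := le_trans hk1 (Fin.castSucc_le_succ i)
            have hne : ¬ k = i.succ := by
              intro h; subst h
              have h2 := Fin.le_def.mp hk1
              simp only [Fin.val_succ, Fin.coe_castSucc] at h2
              omega
            simp [this, hk1, hne]
          · by_cases hk2 : k = i.succ
            · subst hk2; simp [hk1]
            · have : ¬ k ≤ i.succ := by
                intro h
                rcases h1.mp (by simpa [Fin.le_def] using h) with h' | h'
                · exact hk1 (Fin.le_def.mpr (by simpa using h'))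
                · exact hk2 (Fin.ext (by simpa using h'))
              simp [this, hk1, hk2]
        simp_rw [hsplit, Finset.sum_add_distrib, ih]
        rw [Finset.sum_ite_eq' Finset.univ i.succ (fun k => C k j)]
        simp only [Finset.mem_univ, if_true, hC, Matrix.of_apply, Fin.cases_succ]
        ring
  have hPC : P * C = Matrix.vandermonde x := by
    ext i j
    rw [Matrix.mul_apply]
    simp only [hP, Matrix.of_apply, ite_mul, one_mul, zero_mul]
    rw [tele j i]
    simp [Matrix.vandermonde]
  have hdetP : P.det = 1 := by
    rw [Matrix.det_of_lowerTriangular P]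
    · simp [hP]
    · intro i k h
      have : ¬ k ≤ i := not_le.mpr (by exact h)
      simp [hP, this]
  have hdetC : C.det = (Matrix.vandermonde x).det := by
    rw [← hPC, Matrix.det_mul, hdetP, one_mul]
  rw [← hdetC]
  rw [Matrix.det_succ_column_zero]
  have hzero : ∀ b : Fin (m + 1), b ∈ Finset.univ → b ≠ 0 →
      (-1 : ℝ) ^ (b : ℕ) * C b 0 * (C.submatrix b.succAbove Fin.succ).det = 0 := by
    intro b _ hb
    obtain ⟨i, rfl⟩ := Fin.exists_succ_eq.mpr hb
    have : C i.succ 0 = 0 := by simp [hC]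
    rw [this]; ring
  rw [Finset.sum_eq_single 0 hzero (by simp)]
  have h00 : C 0 0 = 1 := by simp [hC]
  rw [h00]
  simp only [Fin.val_zero, pow_zero, one_mul, Fin.succAbove_zero]
  congr 1

theorem stmt_11 (m : ℕ) (hm : 2 ≤ m + 1) (x : Fin (m + 1) → ℝ) (hx : Monotone x) :
    (∫ t : Fin m → ℝ in Set.univ.pi fun i : Fin m => Set.Icc (x i.castSucc) (x i.succ),
        ∏ i : Fin m, ∏ j ∈ Finset.Ioi i, (t j - t i)) =
      (∏ i : Fin (m + 1), ∏ j ∈ Finset.Ioi i, (x j - x i)) / (Nat.factorial m : ℝ) := by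
  have hle : ∀ i : Fin m, x i.castSucc ≤ x i.succ := fun i => hx (Fin.castSucc_le_succ i)
  set N : Matrix (Fin m) (Fin m) ℝ := Matrix.of fun a b =>
    (((a : ℕ) + 1 : ℝ))⁻¹ *
      (x b.succ ^ ((a : ℕ) + 1) - x b.castSucc ^ ((a : ℕ) + 1)) with hN
  have hint : ∀ t : Fin m → ℝ, (∏ i : Fin m, ∏ j ∈ Finset.Ioi i, (t j - t i))
      = ∑ σ : Equiv.Perm (Fin m), ((Equiv.Perm.sign σ : ℤ) : ℝ) *
          ∏ j : Fin m, t j ^ ((σ⁻¹ j : Fin m) : ℕ) := by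
    intro t
    rw [← Matrix.det_vandermonde t, Matrix.det_apply']
    refine Finset.sum_congr rfl fun σ _ => ?_
    congr 1
    rw [← Equiv.prod_comp σ (fun j => t j ^ ((σ⁻¹ j : Fin m) : ℕ))]
    refine Finset.prod_congr rfl fun i _ => ?_
    simp [Matrix.vandermonde]
  simp_rw [hint]
  rw [MeasureTheory.integral_finset_sum]
  · have hterm : ∀ σ : Equiv.Perm (Fin m),
        (∫ t : Fin m → ℝ in Set.univ.pi fun i : Fin m => Set.Icc (x i.castSucc) (x i.succ),
          ((Equiv.Perm.sign σ : ℤ) : ℝ) * ∏ j : Fin m, t j ^ ((σ⁻¹ j : Fin m) : ℕ))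
        = ((Equiv.Perm.sign σ : ℤ) : ℝ) * ∏ j : Fin m, N (σ⁻¹ j) j := by
      intro σ
      rw [MeasureTheory.integral_const_mul]
      congr 1
      rw [box_integral (fun j s => s ^ ((σ⁻¹ j : Fin m) : ℕ))]
      refine Finset.prod_congr rfl fun j _ => ?_
      rw [MeasureTheory.integral_Icc_eq_integral_Ioc,
        ← intervalIntegral.integral_of_le (hle j), integral_pow, hN]
      simp only [Matrix.of_apply]
      rw [inv_mul_eq_div]
    simp_rw [hterm]
    have hdet : (∑ σ : Equiv.Perm (Fin m), ((Equiv.Perm.sign σ : ℤ) : ℝ) *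
        ∏ j : Fin m, N (σ⁻¹ j) j) = N.det := by
      rw [Matrix.det_apply',
        ← Equiv.sum_comp (Equiv.inv (Equiv.Perm (Fin m)))
          (fun σ => ((Equiv.Perm.sign σ : ℤ) : ℝ) * ∏ j : Fin m, N (σ j) j)]
      simp [Equiv.inv_apply]
    rw [hdet, hN]
    rw [show (Matrix.of fun a b : Fin m => (((a : ℕ) + 1 : ℝ))⁻¹ *
        (x b.succ ^ ((a : ℕ) + 1) - x b.castSucc ^ ((a : ℕ) + 1))) =
        Matrix.of fun a b : Fin m => (fun a : Fin m => (((a : ℕ) + 1 : ℝ))⁻¹) a *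
          (Matrix.of fun a b : Fin m =>
            x b.succ ^ ((a : ℕ) + 1) - x b.castSucc ^ ((a : ℕ) + 1)) a b from rfl,
      Matrix.det_mul_column]
    have hD : (Matrix.of fun a b : Fin m =>
        x b.succ ^ ((a : ℕ) + 1) - x b.castSucc ^ ((a : ℕ) + 1)).det
        = ∏ i : Fin (m + 1), ∏ j ∈ Finset.Ioi i, (x j - x i) := by
      have h2 := det_diff_eq m x
      rw [Matrix.det_vandermonde] at h2
      rw [← h2, ← Matrix.det_transpose]
      congr 1
    have hfact : (∏ a : Fin m, (((a : ℕ) + 1 : ℝ))⁻¹) = ((Nat.factorial m : ℝ))⁻¹ := by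
      rw [Finset.prod_inv_distrib]
      congr 1
      rw [show (fun a : Fin m => ((a : ℕ) + 1 : ℝ)) = fun a : Fin m => (((a : ℕ) + 1 : ℕ) : ℝ)
        from by norm_num]
      rw [Fin.prod_univ_eq_prod_range (fun k => ((k + 1 : ℕ) : ℝ)) m, ← Nat.cast_prod,
        Finset.prod_range_add_one_eq_factorial]
    rw [hfact, inv_mul_eq_div, ← hD]
  · intro σ _
    apply ContinuousOn.integrableOn_compact
    · exact isCompact_univ_pi fun i => isCompact_Icc
    · refine Continuous.continuousOn ?_
      exact continuous_const.mul
        (continuous_finset_prod Finset.univ fun j _ => (continuous_apply j).pow _)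
end

section
/- Let v_1 < v_2 < ... < v_n be real numbers with mean m = (v_1+...+v_n)/n, and let f be a real function whose (n+1)-st derivative exists and is positive (in particular convex of all relevant orders) on the interval [v_1, v_n]. Then the divided difference satisfies [v_1,...,v_n]f ≥ f^{(n-1)}(m)/(n-1)!. -/
open Finset

/-- The divided difference of `f` at distinct nodes `v 0, ..., v n`. -/
noncomputable def divDiff {n : ℕ} (f : ℝ → ℝ) (v : Fin (n + 1) → ℝ) : ℝ :=
  ∑ i, f (v i) / ∏ j ∈ Finset.univ.erase i, (v i - v j)

open Polynomial

private lemma polyContDiff (p : Polynomial ℝ) (k : WithTop ℕ∞) :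
    ContDiff ℝ k (fun x => p.eval x) := by
  induction p using Polynomial.induction_on' with
  | add p q hp hq => simpa [Polynomial.eval_add] using hp.add hq
  | monomial m a =>
      simpa [Polynomial.eval_monomial] using (contDiff_const (c := a)).mul (contDiff_id.pow m)

private lemma iteratedDeriv_sub_poly :
    ∀ (k : ℕ) (F : ℝ → ℝ), ContDiff ℝ k F → ∀ (p : Polynomial ℝ) (x : ℝ),
      iteratedDeriv k (fun y => F y - p.eval y) x
        = iteratedDeriv k F x - (Polynomial.derivative^[k] p).eval x := by
  intro k
  induction k with
  | zero => intro F _ p x; simp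
  | succ k ih =>
      intro F hF p x
      have hF' : ContDiff ℝ ((k : WithTop ℕ∞) + 1) F := by exact_mod_cast hF
      have hdiffF : Differentiable ℝ F := hF'.differentiable (by simp)
      have hd : deriv (fun y => F y - p.eval y) = fun y => deriv F y - p.derivative.eval y := by
        funext y
        rw [deriv_fun_sub (hdiffF y) p.differentiableAt, Polynomial.deriv]
      have hderF : ContDiff ℝ k (deriv F) := (contDiff_succ_iff_deriv.mp hF').2.2
      rw [iteratedDeriv_succ', hd, ih (deriv F) hderF p.derivative x,
        Function.iterate_succ_apply, ← iteratedDeriv_succ']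

private lemma iterRolle :
    ∀ (k : ℕ) (g : ℝ → ℝ), ContDiff ℝ k g → ∀ (w : Fin (k + 1) → ℝ), StrictMono w →
      (∀ i, g (w i) = 0) →
      ∃ ξ ∈ Set.Icc (w 0) (w (Fin.last k)), iteratedDeriv k g ξ = 0 := by
  intro k
  induction k with
  | zero =>
      intro g _ w _ hz
      exact ⟨w 0, ⟨le_refl _, le_refl _⟩, by simpa using hz 0⟩
  | succ k ih =>
      intro g hg w hw hz
      have hg' : ContDiff ℝ ((k : WithTop ℕ∞) + 1) g := by exact_mod_cast hg
      have hcont : Continuous g := hg'.continuous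
      have hex : ∀ i : Fin (k + 1), ∃ c ∈ Set.Ioo (w i.castSucc) (w i.succ), deriv g c = 0 := by
        intro i
        exact exists_deriv_eq_zero (hw (Fin.castSucc_lt_succ : i.castSucc < i.succ)) hcont.continuousOn
          (by rw [hz, hz])
      choose c hmem hzero using hex
      have hc : StrictMono c := by
        refine Fin.strictMono_iff_lt_succ.mpr fun i => ?_
        calc c i.castSucc < w i.castSucc.succ := (hmem i.castSucc).2
        _ = w i.succ.castSucc := by rw [Fin.succ_castSucc]
        _ < c i.succ := (hmem i.succ).1
      have hderg : ContDiff ℝ k (deriv g) := (contDiff_succ_iff_deriv.mp hg').2.2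
      obtain ⟨ξ, hξ, hξ0⟩ := ih (deriv g) hderg c hc hzero
      refine ⟨ξ, ⟨?_, ?_⟩, by rwa [iteratedDeriv_succ']⟩
      · calc w 0 = w ((0 : Fin (k+1)).castSucc) := by norm_num
          _ ≤ c 0 := (hmem 0).1.le
          _ ≤ ξ := hξ.1
      · calc ξ ≤ c (Fin.last k) := hξ.2
          _ ≤ w ((Fin.last k).succ) := (hmem (Fin.last k)).2.le
          _ = w (Fin.last (k+1)) := by rw [Fin.succ_last]

private lemma coeff_interpolate (n : ℕ) (v : Fin (n + 1) → ℝ) (hv : StrictMono v)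
    (r : Fin (n + 1) → ℝ) :
    (Lagrange.interpolate univ v r).coeff n = ∑ i, r i / ∏ j ∈ univ.erase i, (v i - v j) := by
  have hinj : Set.InjOn v ↑(univ : Finset (Fin (n+1))) := Set.injOn_of_injective hv.injective
  rw [Lagrange.interpolate_apply, Polynomial.finset_sum_coeff]
  refine Finset.sum_congr rfl fun i _ => ?_
  have hb : Lagrange.basis univ v i
      = C (Lagrange.nodalWeight univ v i) * Lagrange.nodal (univ.erase i) v := by
    rw [Lagrange.basis_eq_prod_sub_inv_mul_nodal_div (mem_univ i),
      ← Lagrange.nodal_erase_eq_nodal_div (mem_univ i)]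
  have hmon : (Lagrange.nodal (univ.erase i) v).Monic := Lagrange.nodal_monic
  have hdeg : (Lagrange.nodal (univ.erase i) v).natDegree = n := by
    rw [Lagrange.natDegree_nodal, card_erase_of_mem (mem_univ i), card_univ, Fintype.card_fin]; omega
  have hcoeff : (Lagrange.nodal (univ.erase i) v).coeff n = 1 := by
    have h2 := hmon.coeff_natDegree
    rwa [hdeg] at h2
  rw [coeff_C_mul, hb, coeff_C_mul, hcoeff, mul_one,
    Lagrange.nodalWeight, div_eq_mul_inv, Finset.prod_inv_distrib]

private lemma divDiff_eq_coeff (n : ℕ) (v : Fin (n + 1) → ℝ) (hv : StrictMono v) (F : ℝ → ℝ) :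
    divDiff F v = (Lagrange.interpolate univ v (F ∘ v)).coeff n := by
  rw [coeff_interpolate n v hv]; rfl

private lemma divDiff_poly (n : ℕ) (v : Fin (n + 1) → ℝ) (hv : StrictMono v) (q : Polynomial ℝ)
    (hq : q.natDegree ≤ n + 1) :
    divDiff (fun x => q.eval x) v = q.coeff n + q.coeff (n + 1) * ∑ i, v i := by
  have hinj : Set.InjOn v ↑(univ : Finset (Fin (n+1))) := Set.injOn_of_injective hv.injective
  have hcard : #(univ : Finset (Fin (n + 1))) = n + 1 := by simp
  set c := q.coeff (n + 1) with hc
  set r := q - C c * Lagrange.nodal univ v with hr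
  have hnodaldeg : (Lagrange.nodal univ v).natDegree = n + 1 := by
    rw [Lagrange.natDegree_nodal, hcard]
  have hrdeg : r.degree < (#(univ : Finset (Fin (n + 1))) : ℕ) := by
    rw [hcard]
    refine Polynomial.degree_lt_iff_coeff_zero _ _ |>.mpr fun m hm => ?_
    rw [hr, coeff_sub, coeff_C_mul]
    have hlead : (Lagrange.nodal univ v).coeff (n + 1) = 1 := by
      have h2 := (Lagrange.nodal_monic (s := univ) (v := v)).coeff_natDegree
      rwa [hnodaldeg] at h2
    rcases eq_or_lt_of_le (by exact_mod_cast hm : (n + 1 : ℕ) ≤ m) with h | h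
    · subst h
      rw [hlead, mul_one, hc, sub_self]
    · rw [coeff_eq_zero_of_natDegree_lt (lt_of_le_of_lt hq h),
        coeff_eq_zero_of_natDegree_lt (by rw [hnodaldeg]; exact h), mul_zero, sub_zero]
  have hvals : Lagrange.interpolate univ v (fun i => q.eval (v i))
      = Lagrange.interpolate univ v (fun i => r.eval (v i)) := by
    refine Lagrange.interpolate_eq_of_values_eq_on _ _ fun i _ => ?_
    rw [hr, eval_sub, eval_mul, eval_C, Lagrange.eval_nodal_at_node (mem_univ i), mul_zero,
      sub_zero]
  have h1 : divDiff (fun x => q.eval x) v = r.coeff n := by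
    rw [divDiff_eq_coeff n v hv, show (fun x => q.eval x) ∘ v = fun i => q.eval (v i) from rfl,
      hvals, ← Lagrange.eq_interpolate hinj hrdeg]
  have hn : (Lagrange.nodal univ v).coeff n = -∑ i, v i := by
    have h3 := Polynomial.prod_X_sub_C_coeff_card_pred (univ : Finset (Fin (n + 1))) v
      (by rw [hcard]; omega)
    rw [hcard] at h3
    simpa [Lagrange.nodal_eq] using h3
  rw [h1, hr, coeff_sub, coeff_C_mul, hn]
  ring

private lemma divDiff_MVT (n : ℕ) (v : Fin (n + 1) → ℝ) (hv : StrictMono v) (F : ℝ → ℝ)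
    (hF : ContDiff ℝ n F) :
    ∃ ξ ∈ Set.Icc (v 0) (v (Fin.last n)), iteratedDeriv n F ξ = n.factorial * divDiff F v := by
  have hinj : Set.InjOn v ↑(univ : Finset (Fin (n+1))) := Set.injOn_of_injective hv.injective
  set p := Lagrange.interpolate univ v (F ∘ v) with hp
  have hzero : ∀ i, F (v i) - p.eval (v i) = 0 := by
    intro i
    rw [hp, Lagrange.eval_interpolate_at_node _ hinj (mem_univ i)]
    simp
  have hcd : ContDiff ℝ n (fun x => F x - p.eval x) := hF.sub (polyContDiff p n)
  obtain ⟨ξ, hξI, hξ⟩ := iterRolle n _ hcd v hv hzero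
  rw [iteratedDeriv_sub_poly n F hF p ξ] at hξ
  -- compute the iterated derivative of p
  have hpdeg : p.natDegree ≤ n := by
    have h1 := Lagrange.degree_interpolate_lt (r := F ∘ v) hinj
    rw [show #(univ : Finset (Fin (n+1))) = n + 1 by simp] at h1
    rcases eq_or_ne p 0 with h | h
    · simp [h]
    · have := (Polynomial.natDegree_lt_iff_degree_lt (n := n + 1) h).mpr (by exact_mod_cast h1)
      omega
  have hiter : ((Polynomial.derivative)^[n] p).natDegree = 0 := by
    have := Polynomial.natDegree_iterate_derivative p n
    omega
  have hCform : (Polynomial.derivative)^[n] p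
      = Polynomial.C (((Polynomial.derivative)^[n] p).coeff 0) :=
    (Polynomial.eq_C_of_natDegree_eq_zero hiter)
  have hcoeff0 : ((Polynomial.derivative)^[n] p).coeff 0 = n.factorial * divDiff F v := by
    rw [Polynomial.coeff_iterate_derivative, zero_add, Nat.descFactorial_self, nsmul_eq_mul,
      divDiff_eq_coeff n v hv]
  refine ⟨ξ, hξI, ?_⟩
  rw [hCform, Polynomial.eval_C, hcoeff0] at hξ
  linarith [hξ]

private lemma descfac_succ : ∀ n : ℕ, (n + 1).descFactorial n = (n + 1).factorial := by
  intro n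
  induction n with
  | zero => rfl
  | succ n ih => rw [Nat.succ_descFactorial_succ, ih, ← Nat.factorial_succ]

private lemma divDiff_sub_poly (n : ℕ) (f : ℝ → ℝ) (q : Polynomial ℝ) (v : Fin (n + 1) → ℝ) :
    divDiff (fun x => f x - q.eval x) v = divDiff f v - divDiff (fun x => q.eval x) v := by
  simp [divDiff, sub_div, Finset.sum_sub_distrib]

theorem stmt_13 (n : ℕ) (v : Fin (n + 1) → ℝ) (hv : StrictMono v) (f : ℝ → ℝ)
    (hder : ∀ x ∈ Set.Icc (v 0) (v (Fin.last n)),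
      0 < iteratedDeriv (n + 2) f x)
    (hdiff : ContDiff ℝ (n + 2) f) :
    divDiff f v ≥ iteratedDeriv n f ((∑ i, v i) / (n + 1)) / (Nat.factorial n : ℝ) := by
  set I := Set.Icc (v 0) (v (Fin.last n)) with hI
  set m : ℝ := (∑ i, v i) / (n + 1) with hmdef
  have hn1pos : (0:ℝ) < n + 1 := by positivity
  have hfacne : ((n.factorial : ℝ)) ≠ 0 := Nat.cast_ne_zero.mpr n.factorial_ne_zero
  have hfac1ne : (((n+1).factorial : ℝ)) ≠ 0 := Nat.cast_ne_zero.mpr (n+1).factorial_ne_zero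
  have hsum : (∑ i, v i) = (n + 1 : ℝ) * m := by
    rw [hmdef, mul_div_cancel₀ _ (ne_of_gt hn1pos)]
  have hmI : m ∈ I := by
    constructor
    · rw [hmdef, le_div_iff₀ hn1pos]
      calc v 0 * (n + 1) = ∑ _i : Fin (n + 1), v 0 := by
            rw [Finset.sum_const, card_univ, Fintype.card_fin, nsmul_eq_mul]; push_cast; ring
        _ ≤ ∑ i, v i := Finset.sum_le_sum fun i _ => hv.monotone (Fin.zero_le i)
    · rw [hmdef, div_le_iff₀ hn1pos]
      calc (∑ i, v i) ≤ ∑ _i : Fin (n + 1), v (Fin.last n) :=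
            Finset.sum_le_sum fun i _ => hv.monotone (Fin.le_last i)
        _ = v (Fin.last n) * (n + 1) := by
            rw [Finset.sum_const, card_univ, Fintype.card_fin, nsmul_eq_mul]; push_cast; ring
  set b : ℝ := iteratedDeriv (n + 1) f m / (n + 1).factorial with hbdef
  set a : ℝ := iteratedDeriv n f m / n.factorial - b * ((n + 1) * m) with hadef
  set q : Polynomial ℝ := C a * X ^ n + C b * X ^ (n + 1) with hqdef
  set g : ℝ → ℝ := fun x => f x - q.eval x with hgdef
  -- smoothness bookkeeping
  have hf2 : ContDiff ℝ ((n + 2 : ℕ) : WithTop ℕ∞) f := by exact_mod_cast hdiff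
  have hfk : ∀ k : ℕ, k ≤ n + 2 → ContDiff ℝ (k : WithTop ℕ∞) f := fun k hk =>
    hf2.of_le (by exact_mod_cast hk)
  have hg2 : ContDiff ℝ ((n + 2 : ℕ) : WithTop ℕ∞) g := hf2.sub (polyContDiff q _)
  have hgk : ∀ k : ℕ, k ≤ n + 2 → ContDiff ℝ (k : WithTop ℕ∞) g := fun k hk =>
    hg2.of_le (by exact_mod_cast hk)
  -- iterated derivatives of q
  have hqk : ∀ k : ℕ, (Polynomial.derivative)^[k] q
      = C a * (Polynomial.derivative)^[k] (X ^ n : Polynomial ℝ)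
        + C b * (Polynomial.derivative)^[k] (X ^ (n + 1) : Polynomial ℝ) := by
    intro k
    induction k with
    | zero => simp [hqdef]
    | succ k ih =>
        rw [Function.iterate_succ_apply', Function.iterate_succ_apply',
          Function.iterate_succ_apply', ih, derivative_add, Polynomial.derivative_C_mul,
          Polynomial.derivative_C_mul]
  have hqn : ∀ x : ℝ, ((Polynomial.derivative)^[n] q).eval x
      = a * n.factorial + b * ((n + 1).factorial * x) := by
    intro x
    rw [hqk n, Polynomial.iterate_derivative_X_pow_eq_C_mul,
      Polynomial.iterate_derivative_X_pow_eq_C_mul, Nat.descFactorial_self, descfac_succ,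
      Nat.sub_self, show n + 1 - n = 1 by omega]
    simp
  have hqn1 : ∀ x : ℝ, ((Polynomial.derivative)^[n + 1] q).eval x = b * (n + 1).factorial := by
    intro x
    rw [hqk (n + 1), Polynomial.iterate_derivative_eq_zero (by simp [Polynomial.natDegree_X_pow]),
      Polynomial.iterate_derivative_X_pow_eq_C_mul, Nat.descFactorial_self, Nat.sub_self]
    simp [mul_comm]
  have hqn2 : ∀ x : ℝ, ((Polynomial.derivative)^[n + 2] q).eval x = 0 := by
    intro x
    rw [hqk (n + 2), Polynomial.iterate_derivative_eq_zero (by simp [Polynomial.natDegree_X_pow]),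
      Polynomial.iterate_derivative_eq_zero (by simp [Polynomial.natDegree_X_pow])]
    simp
  -- iterated derivatives of g
  have Hn : ∀ x : ℝ, iteratedDeriv n g x
      = iteratedDeriv n f x - (a * n.factorial + b * ((n + 1).factorial * x)) := by
    intro x
    rw [hgdef, iteratedDeriv_sub_poly n f (hfk n (by omega)) q x, hqn x]
  have Hn1 : ∀ x : ℝ, iteratedDeriv (n + 1) g x
      = iteratedDeriv (n + 1) f x - b * (n + 1).factorial := by
    intro x
    rw [hgdef, iteratedDeriv_sub_poly (n + 1) f (hfk (n + 1) (by omega)) q x, hqn1 x]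
  have Hn2 : ∀ x : ℝ, iteratedDeriv (n + 2) g x = iteratedDeriv (n + 2) f x := by
    intro x
    rw [hgdef, iteratedDeriv_sub_poly (n + 2) f (hfk (n + 2) le_rfl) q x, hqn2 x, sub_zero]
  -- values at m
  have hfacsucc : (((n + 1).factorial : ℝ)) = (n + 1) * n.factorial := by
    rw [Nat.factorial_succ]; push_cast; ring
  have hm0 : iteratedDeriv n g m = 0 := by
    have ha1 : a * n.factorial = iteratedDeriv n f m - b * ((n + 1) * m) * n.factorial := by
      rw [hadef, sub_mul, div_mul_cancel₀ _ hfacne]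
    rw [Hn m, hfacsucc]
    linear_combination -ha1
  have hm1 : iteratedDeriv (n + 1) g m = 0 := by
    rw [Hn1 m, hbdef]
    field_simp
    simp
  -- strict monotonicity of (n+1)-st derivative of g on I
  have hconv : Convex ℝ I := convex_Icc _ _
  have hcont1 : ContinuousOn (iteratedDeriv (n + 1) g) I :=
    (hg2.continuous_iteratedDeriv (n + 1) (by exact_mod_cast Nat.le_succ (n+1))).continuousOn
  have hSM : StrictMonoOn (iteratedDeriv (n + 1) g) I := by
    refine strictMonoOn_of_deriv_pos hconv hcont1 fun x hx => ?_
    rw [← iteratedDeriv_succ, Hn2 x]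
    exact hder x (interior_subset hx)
  have hdiffh : Differentiable ℝ (iteratedDeriv n g) :=
    hg2.differentiable_iteratedDeriv n (by exact_mod_cast Nat.lt_add_of_pos_right (by omega))
  have hconth : Continuous (iteratedDeriv n g) := hdiffh.continuous
  have hderiveq : deriv (iteratedDeriv n g) = iteratedDeriv (n + 1) g := iteratedDeriv_succ.symm
  -- nonnegativity of the n-th derivative of g on I
  have hnonneg : ∀ x ∈ I, 0 ≤ iteratedDeriv n g x := by
    intro x hx
    rcases lt_trichotomy x m with hlt | heq | hgt
    · obtain ⟨c, hc, hc'⟩ := exists_deriv_eq_slope (iteratedDeriv n g) hlt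
        hconth.continuousOn (fun y _ => (hdiffh y).differentiableWithinAt)
      have hcI : c ∈ I := ⟨hx.1.trans hc.1.le, hc.2.le.trans hmI.2⟩
      have hneg : iteratedDeriv (n + 1) g c < 0 := by
        have := hSM hcI hmI hc.2
        rwa [hm1] at this
      rw [hderiveq] at hc'
      have hmx : (0:ℝ) < m - x := by linarith
      have : iteratedDeriv (n + 1) g c * (m - x) = iteratedDeriv n g m - iteratedDeriv n g x :=
        (div_eq_iff (ne_of_gt hmx)).mp hc'.symm |>.symm
      nlinarith [hm0]
    · rw [heq, hm0]
    · obtain ⟨c, hc, hc'⟩ := exists_deriv_eq_slope (iteratedDeriv n g) hgt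
        hconth.continuousOn (fun y _ => (hdiffh y).differentiableWithinAt)
      have hcI : c ∈ I := ⟨hmI.1.trans hc.1.le, hc.2.le.trans hx.2⟩
      have hpos : 0 < iteratedDeriv (n + 1) g c := by
        have := hSM hmI hcI hc.1
        rwa [hm1] at this
      rw [hderiveq] at hc'
      have hmx : (0:ℝ) < x - m := by linarith
      have : iteratedDeriv (n + 1) g c * (x - m) = iteratedDeriv n g x - iteratedDeriv n g m :=
        (div_eq_iff (ne_of_gt hmx)).mp hc'.symm |>.symm
      nlinarith [hm0]
  -- divided difference of g is nonnegative
  obtain ⟨ξ, hξI, hξ⟩ := divDiff_MVT n v hv g (hgk n (by omega))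
  have hdg : 0 ≤ divDiff g v := by
    have h0 := hnonneg ξ hξI
    rw [hξ] at h0
    have : (0:ℝ) < n.factorial := by positivity
    nlinarith
  -- divided difference of q
  have hqnd : q.natDegree ≤ n + 1 := by
    refine le_trans (Polynomial.natDegree_add_le _ _) (max_le ?_ ?_)
    · exact le_trans (Polynomial.natDegree_C_mul_le _ _) (by simp [Polynomial.natDegree_X_pow])
    · exact le_trans (Polynomial.natDegree_C_mul_le _ _) (by simp [Polynomial.natDegree_X_pow])
  have hqcn : q.coeff n = a := by
    simp [hqdef, Polynomial.coeff_X_pow]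
  have hqcn1 : q.coeff (n + 1) = b := by
    simp [hqdef, Polynomial.coeff_X_pow]
  have hdq : divDiff (fun x => q.eval x) v = a + b * ∑ i, v i := by
    rw [divDiff_poly n v hv q hqnd, hqcn, hqcn1]
  -- conclusion
  have hlin : divDiff g v = divDiff f v - divDiff (fun x => q.eval x) v :=
    divDiff_sub_poly n f q v
  have hfinal : a + b * ∑ i, v i = iteratedDeriv n f m / n.factorial := by
    rw [hsum, hadef]; ring
  rw [ge_iff_le, ← hfinal, ← hdq]
  linarith [hdg, hlin]
end

section
/- Let n ≥ 1 and x1 < ... < xn, y1 < ... < yn be real. Then det([e^{x_i y_j}]) ≤ e^{x_1 y_1 + x_2 y_2 + ... + x_n y_n}, i.e., the determinant is at most the product of the diagonal entries. -/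
open Real Filter Set

noncomputable def eM {m : ℕ} (x y : Fin m → ℝ) : Matrix (Fin m) (Fin m) ℝ :=
  Matrix.of fun i j => Real.exp (x i * y j)

/-- Derivative of an exponential sum. -/
lemma hasDerivAt_expsum {m : ℕ} (c d : Fin m → ℝ) (t : ℝ) :
    HasDerivAt (fun s => ∑ i, c i * Real.exp (d i * s))
      (∑ i, c i * d i * Real.exp (d i * t)) t := by
  have h : ∀ i ∈ Finset.univ, HasDerivAt (fun s => c i * Real.exp (d i * s))
      (c i * d i * Real.exp (d i * t)) t := by
    intro i _
    have : HasDerivAt (fun y => c i * Real.exp (d i * y))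
        (c i * (Real.exp (d i * t) * (d i * 1))) t :=
      (((hasDerivAt_id t).const_mul (d i)).exp).const_mul (c i)
    convert this using 1
    ring
  exact HasDerivAt.fun_sum h

lemma continuous_expsum {m : ℕ} (c d : Fin m → ℝ) :
    Continuous (fun s => ∑ i, c i * Real.exp (d i * s)) :=
  continuous_finset_sum _ fun i _ =>
    continuous_const.mul (Real.continuous_exp.comp (continuous_const.mul continuous_id))

/-- Zero counting: an exponential polynomial with `n+1` nonzero terms cannot have
`n+1` distinct zeros. -/
lemma expsum_zeros : ∀ (n : ℕ) (d c : Fin (n + 1) → ℝ), StrictMono d → (∀ i, c i ≠ 0) →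
    ∀ t : Fin (n + 1) → ℝ, StrictMono t →
    (∀ j, ∑ i, c i * Real.exp (d i * t j) = 0) → False := by
  intro n
  induction n with
  | zero =>
    intro d c hd hc t ht hz
    have h0 := hz 0
    simp only [Fin.sum_univ_succ, Finset.univ_eq_empty, Finset.sum_empty, add_zero] at h0
    exact hc 0 (by
      rcases mul_eq_zero.1 h0 with h | h
      · exact h
      · exact absurd h (Real.exp_ne_zero _))
  | succ n ih =>
    intro d c hd hc t ht hz
    set F : ℝ → ℝ := fun s => ∑ i, c i * Real.exp ((d i - d 0) * s) with hF
    have hF0 : ∀ j, F (t j) = 0 := by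
      intro j
      have : F (t j) = (∑ i, c i * Real.exp (d i * t j)) * Real.exp (-(d 0) * t j) := by
        rw [Finset.sum_mul]
        refine Finset.sum_congr rfl fun i _ => ?_
        rw [mul_assoc, ← Real.exp_add]
        ring_nf
      rw [this, hz j, zero_mul]
    have hder : ∀ s : ℝ, HasDerivAt F
        (∑ i, c i * (d i - d 0) * Real.exp ((d i - d 0) * s)) s := by
      intro s
      exact hasDerivAt_expsum c (fun i => d i - d 0) s
    have rolle : ∀ j : Fin (n + 1), ∃ s ∈ Set.Ioo (t j.castSucc) (t j.succ),
        (∑ i, c i * (d i - d 0) * Real.exp ((d i - d 0) * s)) = 0 := by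
      intro j
      obtain ⟨s, hs, hds⟩ := exists_deriv_eq_zero (ht (Fin.castSucc_lt_succ : j.castSucc < j.succ))
        ((continuous_expsum c (fun i => d i - d 0)).continuousOn)
        ((hF0 j.castSucc).trans (hF0 j.succ).symm)
      exact ⟨s, hs, by rw [← (hder s).deriv]; exact hds⟩
    choose s hmem hval using rolle
    have hsmono : StrictMono s := by
      rw [Fin.strictMono_iff_lt_succ]
      intro i
      have h1 := (hmem i.castSucc).2
      have h2 := (hmem i.succ).1
      have : (i.castSucc).succ = (i.succ).castSucc := Fin.succ_castSucc i
      rw [this] at h1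
      exact lt_trans h1 h2
    refine ih (fun i => d i.succ - d 0) (fun i => c i.succ * (d i.succ - d 0))
      (fun a b hab => sub_lt_sub_right (hd (Fin.succ_lt_succ_iff.mpr hab)) _)
      (fun i => mul_ne_zero (hc _) (sub_ne_zero.mpr (hd (Fin.succ_pos i)).ne'))
      s hsmono ?_
    intro j
    have := hval j
    rw [Fin.sum_univ_succ] at this
    simp only [sub_self, mul_zero, zero_mul, zero_add] at this
    calc (∑ i : Fin (n + 1), c i.succ * (d i.succ - d 0) *
            Real.exp ((d i.succ - d 0) * s j))
        = ∑ i : Fin (n + 1), c i.succ * (d i.succ - d 0) *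
            Real.exp ((d i.succ - d 0) * s j) := rfl
      _ = 0 := this

lemma eM_expand {n : ℕ} (x z : Fin (n + 1) → ℝ) :
    (eM x z).det = ∑ i : Fin (n + 1), (-1 : ℝ) ^ ((i : ℕ) + n) * Real.exp (x i * z (Fin.last n)) *
      (eM (x ∘ i.succAbove) (z ∘ Fin.castSucc)).det := by
  rw [Matrix.det_succ_column (eM x z) (Fin.last n)]
  refine Finset.sum_congr rfl fun i _ => ?_
  rw [Fin.succAbove_last]
  rfl

lemma eM_det_pos : ∀ (m : ℕ) (x y : Fin m → ℝ), StrictMono x → StrictMono y →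
    0 < (eM x y).det := by
  intro m
  induction m with
  | zero => intro x y _ _; simp [eM]
  | succ n ih =>
    intro x y hx hy
    set c : Fin (n + 1) → ℝ :=
      fun i => (-1 : ℝ) ^ ((i : ℕ) + n) * (eM (x ∘ i.succAbove) (y ∘ Fin.castSucc)).det with hcdef
    have hMpos : ∀ i : Fin (n + 1), 0 < (eM (x ∘ i.succAbove) (y ∘ Fin.castSucc)).det :=
      fun i => ih _ _ (hx.comp (Fin.strictMono_succAbove i)) (hy.comp Fin.strictMono_castSucc)
    have hcne : ∀ i, c i ≠ 0 := fun i =>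
      mul_ne_zero (pow_ne_zero _ (by norm_num)) (hMpos i).ne'
    have hclast : c (Fin.last n) = (eM (x ∘ (Fin.last n).succAbove) (y ∘ Fin.castSucc)).det := by
      rw [hcdef]
      simp only [Fin.val_last]
      rw [Even.neg_one_pow ⟨n, rfl⟩, one_mul]
    have hclast_pos : 0 < c (Fin.last n) := hclast ▸ hMpos _
    set f : ℝ → ℝ := fun t => ∑ i, c i * Real.exp ((x i - x (Fin.last n)) * t) with hfdef
    have hfapp : ∀ t : ℝ, f t = ∑ i, c i * Real.exp ((x i - x (Fin.last n)) * t) :=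
      fun t => rfl
    have hcapp : ∀ i : Fin (n + 1),
        c i = (-1 : ℝ) ^ ((i : ℕ) + n) * (eM (x ∘ i.succAbove) (y ∘ Fin.castSucc)).det :=
      fun i => rfl
    -- f t * exp (x_last * t) equals the determinant of the matrix with last node t
    have hDdet : ∀ t : ℝ, f t * Real.exp (x (Fin.last n) * t) =
        (eM x (fun j => if j = Fin.last n then t else y j)).det := by
      intro t
      rw [eM_expand, hfapp, Finset.sum_mul]
      refine Finset.sum_congr rfl fun i _ => ?_
      have h2 : ((fun j => if j = Fin.last n then t else y j) ∘ Fin.castSucc) =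
          y ∘ Fin.castSucc := funext fun j => if_neg (Fin.castSucc_lt_last j).ne
      simp only [if_pos rfl, h2, if_true]
      rw [hcapp, mul_assoc, mul_assoc, ← Real.exp_add]
      ring_nf
    have hfzero : ∀ j : Fin n, f (y j.castSucc) = 0 := by
      intro j
      have hd := hDdet (y j.castSucc)
      have hz : (eM x (fun k => if k = Fin.last n then y j.castSucc else y k)).det = 0 := by
        refine Matrix.det_zero_of_column_eq (Fin.castSucc_lt_last j).ne (fun k => ?_)
        simp [eM, (Fin.castSucc_lt_last j).ne]
      rw [hz] at hd
      exact (mul_eq_zero.1 hd).resolve_right (Real.exp_ne_zero _)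
    have hfy : f (y (Fin.last n)) * Real.exp (x (Fin.last n) * y (Fin.last n)) =
        (eM x y).det := by
      rw [hDdet]
      have : (fun j => if j = Fin.last n then y (Fin.last n) else y j) = y := by
        funext j
        split_ifs with h
        · rw [h]
        · rfl
      rw [this]
    have htend : Filter.Tendsto f Filter.atTop (nhds (c (Fin.last n))) := by
      have heq : ∀ t : ℝ, f t = (∑ i : Fin n, c i.castSucc *
          Real.exp ((x i.castSucc - x (Fin.last n)) * t)) + c (Fin.last n) := by
        intro t
        rw [hfapp, Fin.sum_univ_castSucc]
        simp [sub_self]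
      have hsum : Filter.Tendsto (fun t => (∑ i : Fin n, c i.castSucc *
          Real.exp ((x i.castSucc - x (Fin.last n)) * t)) + c (Fin.last n)) Filter.atTop
          (nhds (0 + c (Fin.last n))) := by
        refine Filter.Tendsto.add_const _ ?_
        have : Filter.Tendsto (fun t : ℝ => (0 : ℝ)) Filter.atTop (nhds 0) := tendsto_const_nhds
        have h0 : (0 : ℝ) = ∑ i : Fin n, (0 : ℝ) := by simp
        rw [h0]
        refine tendsto_finset_sum _ fun i _ => ?_
        have hneg : x i.castSucc - x (Fin.last n) < 0 :=
          sub_neg.mpr (hx (Fin.castSucc_lt_last i))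
        have h1 : Filter.Tendsto (fun t : ℝ => (x i.castSucc - x (Fin.last n)) * t)
            Filter.atTop Filter.atBot :=
          (tendsto_const_mul_atBot_of_neg hneg).mpr tendsto_id
        have h2 := Real.tendsto_exp_atBot.comp h1
        simpa using h2.const_mul (c i.castSucc)
      rw [zero_add] at hsum
      simpa only [← heq] using hsum
    -- positivity of f at y last
    have hfpos : 0 < f (y (Fin.last n)) := by
      by_contra hle
      push_neg at hle
      have hev : ∀ᶠ t in Filter.atTop, 0 < f t := htend.eventually (eventually_gt_nhds hclast_pos)
      obtain ⟨T, hT⟩ := (hev.and (eventually_gt_atTop (y (Fin.last n)))).exists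
      have hcont : Continuous f := continuous_expsum c _
      have hivt := intermediate_value_Icc hT.2.le hcont.continuousOn
      have h0mem : (0 : ℝ) ∈ Set.Icc (f (y (Fin.last n))) (f T) := ⟨hle, hT.1.le⟩
      obtain ⟨t0, ht0, hft0⟩ := hivt h0mem
      -- build n+1 strictly monotone zeros
      set tz : Fin (n + 1) → ℝ := Fin.snoc (fun j : Fin n => y j.castSucc) t0 with htz
      have htzmono : StrictMono tz := by
        rw [Fin.strictMono_iff_lt_succ]
        intro i
        rcases Fin.eq_castSucc_or_eq_last i.succ with ⟨j, hj⟩ | hj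
        · rw [htz, hj]
          simp only [Fin.snoc_castSucc]
          rw [← hj]
          exact hy (Fin.castSucc_lt_succ : i.castSucc < i.succ)
        · rw [htz, hj]
          simp only [Fin.snoc_castSucc, Fin.snoc_last]
          exact lt_of_lt_of_le (hy (Fin.castSucc_lt_last i)) ht0.1
      refine expsum_zeros n (fun i => x i - x (Fin.last n)) c
        (fun a b hab => sub_lt_sub_right (hx hab) _) hcne tz htzmono (fun j => ?_)
      rcases Fin.eq_castSucc_or_eq_last j with ⟨j', hj⟩ | hj
      · rw [hj]
        have : tz j'.castSucc = y j'.castSucc := Fin.snoc_castSucc _ _ _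
        rw [this]
        exact hfzero j'
      · rw [hj]
        have : tz (Fin.last n) = t0 := Fin.snoc_last _ _
        rw [this]
        exact hft0
    rw [← hfy]
    exact mul_pos hfpos (Real.exp_pos _)

lemma hadamard_step (n : ℕ) (x y : Fin (n + 2) → ℝ) (hx : StrictMono x) (hy : StrictMono y) :
    (eM x y).det ≤ Real.exp (x (Fin.last (n + 1)) * y (Fin.last (n + 1))) *
      (eM (x ∘ Fin.castSucc) (y ∘ Fin.castSucc)).det := by
  set L := Fin.last (n + 1) with hL
  set c : Fin (n + 2) → ℝ :=
    fun i => (-1 : ℝ) ^ ((i : ℕ) + (n + 1)) * (eM (x ∘ i.succAbove) (y ∘ Fin.castSucc)).det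
    with hcdef
  have hMpos : ∀ i : Fin (n + 2), 0 < (eM (x ∘ i.succAbove) (y ∘ Fin.castSucc)).det :=
    fun i => eM_det_pos _ _ _ (hx.comp (Fin.strictMono_succAbove i))
      (hy.comp Fin.strictMono_castSucc)
  have hcapp : ∀ i : Fin (n + 2),
      c i = (-1 : ℝ) ^ ((i : ℕ) + (n + 1)) * (eM (x ∘ i.succAbove) (y ∘ Fin.castSucc)).det :=
    fun i => rfl
  have hcne : ∀ i, c i ≠ 0 := fun i =>
    mul_ne_zero (pow_ne_zero _ (by norm_num)) (hMpos i).ne'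
  have hclast : c L = (eM (x ∘ L.succAbove) (y ∘ Fin.castSucc)).det := by
    rw [hcapp, hL]
    simp only [Fin.val_last]
    rw [Even.neg_one_pow ⟨n + 1, rfl⟩, one_mul]
  set f : ℝ → ℝ := fun t => ∑ i, c i * Real.exp ((x i - x L) * t) with hfdef
  have hfapp : ∀ t : ℝ, f t = ∑ i, c i * Real.exp ((x i - x L) * t) := fun t => rfl
  have hDdet : ∀ t : ℝ, f t * Real.exp (x L * t) =
      (eM x (fun j => if j = L then t else y j)).det := by
    intro t
    rw [eM_expand, hfapp, Finset.sum_mul]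
    refine Finset.sum_congr rfl fun i _ => ?_
    have h2 : ((fun j => if j = L then t else y j) ∘ Fin.castSucc) =
        y ∘ Fin.castSucc := funext fun j => if_neg (Fin.castSucc_lt_last j).ne
    simp only [if_pos hL.symm, h2, if_true]
    rw [hcapp, mul_assoc, mul_assoc, ← Real.exp_add]
    ring_nf
  have hfzero : ∀ j : Fin (n + 1), f (y j.castSucc) = 0 := by
    intro j
    have hd := hDdet (y j.castSucc)
    have hz : (eM x (fun k => if k = L then y j.castSucc else y k)).det = 0 := by
      refine Matrix.det_zero_of_column_eq (Fin.castSucc_lt_last j).ne (fun k => ?_)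
      simp [eM, (Fin.castSucc_lt_last j).ne, ← hL]
    rw [hz] at hd
    exact (mul_eq_zero.1 hd).resolve_right (Real.exp_ne_zero _)
  have hfy : f (y L) * Real.exp (x L * y L) = (eM x y).det := by
    rw [hDdet]
    have : (fun j => if j = L then y L else y j) = y := by
      funext j
      split_ifs with h
      · rw [h]
      · rfl
    rw [this]
  -- the derivative of f
  set cg : Fin (n + 1) → ℝ := fun i => c i.castSucc * (x i.castSucc - x L) with hcgdef
  set dg : Fin (n + 1) → ℝ := fun i => x i.castSucc - x L with hdgdef
  set g : ℝ → ℝ := fun t => ∑ i, cg i * Real.exp (dg i * t) with hgdef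
  have hgapp : ∀ t : ℝ, g t = ∑ i, cg i * Real.exp (dg i * t) := fun t => rfl
  have hdg : ∀ t : ℝ, HasDerivAt f (g t) t := by
    intro t
    have h := hasDerivAt_expsum c (fun i => x i - x L) t
    have heq : (∑ i : Fin (n + 2), c i * (x i - x L) * Real.exp ((x i - x L) * t)) = g t := by
      rw [hgapp, Fin.sum_univ_castSucc]
      simp only [← hL, sub_self, mul_zero, zero_mul, add_zero]
      rfl
    rw [heq] at h
    exact h
  have hgcont : Continuous g := continuous_expsum cg dg
  have hfcont : Continuous f := continuous_expsum c (fun i => x i - x L)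
  set a : ℝ := y ((Fin.last n).castSucc) with hadef
  have haL : a < y L := hy (Fin.castSucc_lt_last (Fin.last n))
  -- Rolle points
  have rolle : ∀ i : Fin n, ∃ s ∈ Set.Ioo (y (Fin.castSucc (Fin.castSucc i)))
      (y (Fin.castSucc i.succ)), g s = 0 := by
    intro i
    have hlt : y (Fin.castSucc (Fin.castSucc i)) < y (Fin.castSucc i.succ) :=
      hy (Fin.strictMono_castSucc (Fin.castSucc_lt_succ : i.castSucc < i.succ))
    obtain ⟨s, hs, hds⟩ := exists_deriv_eq_zero hlt hfcont.continuousOn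
      ((hfzero i.castSucc).trans (hfzero i.succ).symm)
    refine ⟨s, hs, ?_⟩
    rw [← (hdg s).deriv]
    exact hds
  choose s hmem hval using rolle
  have hslt : ∀ i : Fin n, s i < a := by
    intro i
    refine lt_of_lt_of_le (hmem i).2 ?_
    rw [hadef]
    exact hy.monotone (Fin.castSucc_le_castSucc_iff.mpr (Fin.le_last _))
  -- g does not vanish beyond a
  have hgne : ∀ t : ℝ, a < t → g t ≠ 0 := by
    intro t hat hgt
    set tz : Fin (n + 1) → ℝ := Fin.snoc s t with htzdef
    have htzmono : StrictMono tz := by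
      rw [Fin.strictMono_iff_lt_succ]
      intro i
      rcases Fin.eq_castSucc_or_eq_last i.succ with ⟨j, hj⟩ | hj
      · rw [htzdef, hj]
        simp only [Fin.snoc_castSucc]
        have h1 : s i < y (i.succ.castSucc) := (hmem i).2
        have h2 : y (j.castSucc.castSucc) < s j := (hmem j).1
        rw [← hj] at h2
        exact lt_trans h1 h2
      · rw [htzdef, hj]
        simp only [Fin.snoc_castSucc, Fin.snoc_last]
        exact lt_trans (hslt i) hat
    have hdgmono : StrictMono dg := fun p q hpq =>
      sub_lt_sub_right (hx (Fin.strictMono_castSucc hpq)) _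
    have hcgne : ∀ i, cg i ≠ 0 := fun i =>
      mul_ne_zero (hcne _) (sub_ne_zero.mpr (hx (Fin.castSucc_lt_last i)).ne)
    refine expsum_zeros n dg cg hdgmono hcgne tz htzmono (fun j => ?_)
    rcases Fin.eq_castSucc_or_eq_last j with ⟨j', hj⟩ | hj
    · rw [hj]
      have h1 : tz j'.castSucc = s j' := Fin.snoc_castSucc _ _ _
      rw [h1]
      exact hval j'
    · rw [hj]
      have h1 : tz (Fin.last n) = t := Fin.snoc_last _ _
      rw [h1]
      exact hgt
  have hfa : f a = 0 := hfzero (Fin.last n)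
  -- f (y L) is positive thanks to determinant positivity
  have hfypos : 0 < f (y L) := by
    have hdetpos := eM_det_pos (n + 2) x y hx hy
    rw [← hfy] at hdetpos
    nlinarith [Real.exp_pos (x L * y L)]
  -- the derivative g is positive on Ioi a
  have hgpos : ∀ t ∈ Set.Ioi a, 0 < g t := by
    by_contra hnot
    push_neg at hnot
    obtain ⟨u, hu, hgu⟩ := hnot
    have hgu' : g u < 0 := lt_of_le_of_ne hgu (hgne u hu)
    have hneg : ∀ t ∈ Set.Ioi a, g t < 0 := by
      intro t ht
      rcases lt_or_ge (g t) 0 with h | h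
      · exact h
      · exfalso
        rcases le_total u t with hut | htu
        · obtain ⟨w, hw, hgw⟩ := intermediate_value_Icc hut hgcont.continuousOn
            ⟨hgu'.le, h⟩
          exact hgne w (lt_of_lt_of_le hu hw.1) hgw
        · obtain ⟨w, hw, hgw⟩ := intermediate_value_Icc' htu hgcont.continuousOn
            ⟨hgu'.le, h⟩
          exact hgne w (lt_of_lt_of_le ht hw.1) hgw
    have hanti : StrictAntiOn f (Set.Ici a) := by
      refine strictAntiOn_of_deriv_neg (convex_Ici a) hfcont.continuousOn ?_
      intro t ht
      rw [interior_Ici] at ht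
      rw [(hdg t).deriv]
      exact hneg t ht
    have := hanti (Set.self_mem_Ici) (Set.mem_Ici.mpr haL.le) haL
    rw [hfa] at this
    linarith
  have hmono : StrictMonoOn f (Set.Ici a) := by
    refine strictMonoOn_of_deriv_pos (convex_Ici a) hfcont.continuousOn ?_
    intro t ht
    rw [interior_Ici] at ht
    rw [(hdg t).deriv]
    exact hgpos t ht
  -- limit of f at infinity is c L
  have htend : Filter.Tendsto f Filter.atTop (nhds (c L)) := by
    have heq : ∀ t : ℝ, f t = (∑ i : Fin (n + 1), c i.castSucc *
        Real.exp ((x i.castSucc - x L) * t)) + c L := by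
      intro t
      rw [hfapp, Fin.sum_univ_castSucc]
      simp [sub_self, ← hL]
    have hsum : Filter.Tendsto (fun t => (∑ i : Fin (n + 1), c i.castSucc *
        Real.exp ((x i.castSucc - x L) * t)) + c L) Filter.atTop (nhds (0 + c L)) := by
      refine Filter.Tendsto.add_const _ ?_
      have h0 : (0 : ℝ) = ∑ i : Fin (n + 1), (0 : ℝ) := by simp
      rw [h0]
      refine tendsto_finset_sum _ fun i _ => ?_
      have hneg : x i.castSucc - x L < 0 := sub_neg.mpr (hx (Fin.castSucc_lt_last i))
      have h1 : Filter.Tendsto (fun t : ℝ => (x i.castSucc - x L) * t)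
          Filter.atTop Filter.atBot :=
        (tendsto_const_mul_atBot_of_neg hneg).mpr tendsto_id
      have h2 := Real.tendsto_exp_atBot.comp h1
      simpa using h2.const_mul (c i.castSucc)
    rw [zero_add] at hsum
    simpa only [← heq] using hsum
  -- conclude: f (y L) ≤ c L
  have hkey : f (y L) ≤ c L := by
    refine ge_of_tendsto htend ?_
    filter_upwards [eventually_ge_atTop (y L)] with t htt
    exact hmono.monotoneOn (Set.mem_Ici.mpr haL.le)
      (Set.mem_Ici.mpr (le_trans haL.le htt)) htt
  rw [← hfy]
  have h1 : f (y L) * Real.exp (x L * y L) ≤ c L * Real.exp (x L * y L) :=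
    mul_le_mul_of_nonneg_right hkey (Real.exp_pos _).le
  refine le_trans h1 ?_
  rw [hclast, Fin.succAbove_last, mul_comm]

lemma eM_det_le : ∀ (m : ℕ) (x y : Fin m → ℝ), StrictMono x → StrictMono y →
    (eM x y).det ≤ Real.exp (∑ i, x i * y i) := by
  intro m
  induction m with
  | zero => intro x y _ _; simp [eM]
  | succ k ih =>
    intro x y hx hy
    cases k with
    | zero =>
      rw [show (eM x y).det = Real.exp (x 0 * y 0) from Matrix.det_fin_one _, Fin.sum_univ_one]
    | succ k =>
      have hstep := hadamard_step k x y hx hy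
      have hminor := ih (x ∘ Fin.castSucc) (y ∘ Fin.castSucc)
        (hx.comp Fin.strictMono_castSucc) (hy.comp Fin.strictMono_castSucc)
      calc (eM x y).det
          ≤ Real.exp (x (Fin.last (k + 1)) * y (Fin.last (k + 1))) *
            (eM (x ∘ Fin.castSucc) (y ∘ Fin.castSucc)).det := hstep
        _ ≤ Real.exp (x (Fin.last (k + 1)) * y (Fin.last (k + 1))) *
            Real.exp (∑ i : Fin (k + 1), (x ∘ Fin.castSucc) i * (y ∘ Fin.castSucc) i) :=
            mul_le_mul_of_nonneg_left hminor (Real.exp_pos _).le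
        _ = Real.exp (∑ i : Fin (k + 2), x i * y i) := by
            rw [← Real.exp_add]
            congr 1
            rw [Fin.sum_univ_castSucc (f := fun i : Fin (k + 2) => x i * y i)]
            simp only [Function.comp_apply]
            ring

theorem stmt_18 (n : ℕ) (hn : 1 ≤ n) (x y : Fin n → ℝ)
    (hx : StrictMono x) (hy : StrictMono y) :
    Matrix.det (Matrix.of fun i j : Fin n => Real.exp (x i * y j)) ≤
      Real.exp (∑ i, x i * y i) := by
  exact eM_det_le n x y hx hy
end
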